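/- arXiv:2011.02907 — 7 statements merged into one kernel-verified Lean document; each statement's English description precedes it below -/
import Mathlib

section
/- Let p be an odd prime, let 0 < α < 1/2 and β₀ > 0 be real numbers with α + β₀ < 1/2, and suppose that property P(α, β₀) holds for p. Let τ be any real number with max{α + β₀, 1/2 − β₀} < τ < 1/2. Then for every pair of disjoint subsets I, J ⊆ {1, …, p} with |I| ≤ p^{τ+β₀} and |J| ≤ p^{τ+β₀}, the columns φ_i of the Paley matrix Φ_p satisfy |⟨∑_{i∈I} φ_i, ∑_{j∈J} φ_j⟩| ≤ 2·p^{τ−1/2}·√(|I||J|); that is, Φ_p has the (p^{τ+β₀}, 2p^{τ−1/2})-flat restricted isometry property. -/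
open Finset

/-- Quadratic character of `ZMod p`. -/
noncomputable def paleyChar (p : ℕ) (x : ZMod p) : ℤ :=
  open Classical in
  if x = 0 then 0 else if IsSquare x then 1 else -1

/-- Canonical additive character of `ZMod p`. -/
noncomputable def paleyPsi (p : ℕ) (x : ZMod p) : ℂ :=
  Complex.exp (2 * Real.pi * Complex.I * (x.val : ℂ) / p)

/-- The Paley matrix with respect to a labelling `a` of `𝔽_p` and a labelling `b` of the
nonzero quadratic residues.  It has `(p-1)/2 + 1 = (p+1)/2` rows and `p + 1` columns. -/
noncomputable def paleyMatrix (p : ℕ) (a : Fin p → ZMod p) (b : Fin ((p - 1) / 2) → ZMod p) :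
    Matrix (Fin ((p - 1) / 2 + 1)) (Fin (p + 1)) ℂ := fun i j =>
  Fin.cases
    (if (j : ℕ) < p then (1 : ℂ) / Real.sqrt p
     else Complex.I ^ (if p % 4 = 3 then 1 else 0))
    (fun k =>
      if hj : (j : ℕ) < p then (Real.sqrt (2 / p) : ℂ) * paleyPsi p (b k * a ⟨j, hj⟩)
      else 0) i

/-- The standard Hermitian inner product on `ℂ^M` (linear in the first argument). -/
noncomputable def herm {M : ℕ} (x y : Fin M → ℂ) : ℂ :=
  ∑ k, x k * (starRingEnd ℂ) (y k)

/-- Property `𝒫(α, β)` from the Paley graph conjecture: for all subsets `S, T` of `𝔽_p`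
of size greater than `p ^ α`, the double character sum over `S × T` is at most
`p ^ (-β) * |S| * |T|` in absolute value. -/
def PropP (p : ℕ) [NeZero p] (α β : ℝ) : Prop :=
  ∀ S T : Finset (ZMod p), (p : ℝ) ^ α < S.card → (p : ℝ) ^ α < T.card →
    |∑ s ∈ S, ∑ t ∈ T, (paleyChar p (s - t) : ℝ)| ≤ (p : ℝ) ^ (-β) * S.card * T.card

/-! For distinct field elements `x ≠ y`, the Gram entry of the corresponding columns is
`(1 + 2 ∑_{b ∈ Q} ψ(b (x - y))) / p = ∑_t ψ(t² (x - y)) / p = χ(x - y) G / p`, where `G` is the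
quadratic Gauss sum and `‖G‖ = √p`. Away from the last column, `⟨∑_I φ_i, ∑_J φ_j⟩` is therefore
`G / p` times the character sum `∑_{s ∈ S, t ∈ T} χ(s - t)`, which is at most `p^τ √(|S||T|)`:
by `P(α, β₀)` when both sets exceed `p^α`, and trivially otherwise since `α + β₀ ≤ τ`. The last
column meets every other one in an entry of modulus `1 / √p`; as at most one of `I`, `J` contains
it, it contributes at most `|J| / √p ≤ p^(τ - 1/2) √(|I||J|)`. -/

open scoped Matrix

noncomputable def complexQuadraticChar (F : Type*) [Field F] [Fintype F] [DecidableEq F] :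
    MulChar F ℂ :=
  (quadraticChar F).ringHomComp (Int.castRingHom ℂ)

section QuadraticGaussSum

variable {F : Type*} [Field F] [Fintype F]

theorem norm_gaussSum {χ : MulChar F ℂ} (hχ : χ ≠ 1) {ψ : AddChar F ℂ} (hψ : ψ.IsPrimitive) :
    ‖gaussSum χ ψ‖ = √(Fintype.card F) := by
  have h := gaussSum_mul_gaussSum_eq_card hχ hψ
  rw [← star_gaussSum_eq, Complex.star_def, Complex.mul_conj, Complex.normSq_eq_norm_sq] at h
  rw [← Real.sqrt_sq (norm_nonneg _)]
  exact congrArg Real.sqrt (by exact_mod_cast h)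

variable [DecidableEq F]

theorem sum_sq_eq_sum_quadraticChar_add_one_smul {M : Type*} [AddCommGroup M]
    (hF : ringChar F ≠ 2) (f : F → M) :
    ∑ x, f (x ^ 2) = ∑ y, (quadraticChar F y + 1) • f y := by
  rw [← sum_fiberwise univ (· ^ 2) (fun x => f (x ^ 2))]
  refine sum_congr rfl fun y _ => ?_
  rw [sum_congr rfl fun x hx => congrArg f (mem_filter.1 hx).2, sum_const,
    ← quadraticChar_card_sqrts hF y, Set.toFinset_ofPred, natCast_zsmul]

theorem sum_sq_eq_add_two_smul_sum_isSquare {M : Type*} [AddCommGroup M]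
    (hF : ringChar F ≠ 2) (f : F → M) :
    ∑ x, f (x ^ 2) = f 0 + 2 • ∑ y with y ≠ 0 ∧ IsSquare y, f y := by
  have h (y : F) : (quadraticChar F y + 1) • f y =
      (if y = 0 then f y else 0) + if y ≠ 0 ∧ IsSquare y then 2 • f y else 0 := by
    rcases eq_or_ne y 0 with rfl | hy
    · simp
    by_cases hsq : IsSquare y
    · simp [hy, hsq, (quadraticChar_one_iff_isSquare hy).2 hsq, two_smul]
    · simp [hy, hsq, quadraticChar_neg_one_iff_not_isSquare.2 hsq]
  simp only [sum_sq_eq_sum_quadraticChar_add_one_smul hF, h, sum_add_distrib, sum_ite_eq',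
    mem_univ, if_true, ← sum_filter, smul_sum]

theorem sum_addChar_sq_mul (hF : ringChar F ≠ 2) {ψ : AddChar F ℂ} (hψ : ψ.IsPrimitive)
    {a : F} (ha : a ≠ 0) :
    ∑ x, ψ (x ^ 2 * a) = complexQuadraticChar F a * gaussSum (complexQuadraticChar F) ψ := by
  have hχ : (complexQuadraticChar F).IsQuadratic := (quadraticChar_isQuadratic F).comp _
  have hshift := gaussSum_mulShift_eq (complexQuadraticChar F) ψ (Units.mk0 a ha)
  rw [hχ.inv, Units.val_mk0] at hshift
  rw [sum_sq_eq_sum_quadraticChar_add_one_smul hF (fun y => ψ (y * a))]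
  simp only [add_smul, one_smul, sum_add_distrib, AddChar.sum_mulShift a hψ, if_neg ha,
    Nat.cast_zero, add_zero]
  rw [← hshift]
  simp only [gaussSum, AddChar.mulShift_apply, zsmul_eq_mul, mul_comm a]
  rfl

end QuadraticGaussSum

section Herm

variable {M : ℕ}

theorem herm_sum_columns {n : Type*} (A : Matrix (Fin M) n ℂ) (I J : Finset n) :
    herm (fun m => ∑ i ∈ I, A m i) (fun m => ∑ j ∈ J, A m j) =
      ∑ i ∈ I, ∑ j ∈ J, herm (Aᵀ i) (Aᵀ j) := by
  simp only [herm, Matrix.transpose_apply, map_sum, sum_mul_sum]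
  rw [sum_comm]
  exact sum_congr rfl fun i _ => sum_comm

theorem norm_herm_comm (x y : Fin M → ℂ) : ‖herm x y‖ = ‖herm y x‖ := by
  rw [← Complex.norm_conj (herm y x)]
  simp only [herm, map_sum, map_mul, Complex.conj_conj, mul_comm]

end Herm

theorem Fin.sum_finset_eq_sum_castSucc_add {M : Type*} [AddCommMonoid M] {n : ℕ}
    (I : Finset (Fin (n + 1))) (g : Fin (n + 1) → M) :
    ∑ i ∈ I, g i = ∑ i : Fin n with i.castSucc ∈ I, g i.castSucc +
      if Fin.last n ∈ I then g (Fin.last n) else 0 := by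
  rw [sum_filter, ← Fin.sum_univ_castSucc (fun i => if i ∈ I then g i else 0), sum_ite_mem,
    univ_inter]

theorem card_filter_castSucc_mem_le {n : ℕ} (I : Finset (Fin (n + 1))) :
    #{i : Fin n | i.castSucc ∈ I} ≤ #I :=
  card_le_card_of_injOn Fin.castSucc (fun _ hi => (mem_filter.1 hi).2)
    (Fin.castSucc_injective n).injOn

section RpowBounds

variable {q : ℝ}

theorem sqrt_mul_le_rpow (hq : 1 ≤ q) {x y c₁ c₂ c : ℝ} (hx : x ≤ q ^ c₁) (hy0 : 0 ≤ y)
    (hy : y ≤ q ^ c₂) (hc : c₁ + c₂ ≤ 2 * c) : √(x * y) ≤ q ^ c :=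
  calc √(x * y) ≤ √(q ^ (c₁ + c₂)) := by
        rw [Real.rpow_add (by linarith)]
        exact Real.sqrt_le_sqrt (mul_le_mul hx hy hy0 (by positivity))
    _ ≤ √(q ^ (2 * c)) := Real.sqrt_le_sqrt (Real.rpow_le_rpow_of_exponent_le hq hc)
    _ = q ^ c := by
        rw [Real.sqrt_eq_rpow, ← Real.rpow_mul (by linarith)]
        ring_nf

theorem le_rpow_mul_sqrt (hq : 0 < q) {A x y e τ : ℝ} (hxy : 0 ≤ x * y)
    (hA : A ≤ q ^ e * (x * y)) (hsqrt : √(x * y) ≤ q ^ (τ - e)) :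
    A ≤ q ^ τ * √(x * y) :=
  calc A ≤ q ^ e * (√(x * y) * √(x * y)) := by rwa [Real.mul_self_sqrt hxy]
    _ ≤ q ^ e * (q ^ (τ - e) * √(x * y)) := by gcongr
    _ = q ^ τ * √(x * y) := by rw [← mul_assoc, ← Real.rpow_add hq]; ring_nf

theorem div_sqrt_le_rpow_mul_sqrt (hq : 1 ≤ q) {x y τ β : ℝ} (hβ : β ≤ τ) (hx : 1 ≤ x)
    (hy0 : 0 ≤ y) (hy : y ≤ q ^ (τ + β)) : y / √q ≤ q ^ (τ - 1 / 2) * √(x * y) := by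
  have hq0 : 0 < q := by linarith
  have hy' : y ≤ q ^ τ * √(1 * y) :=
    le_rpow_mul_sqrt (e := 0) hq0 (by positivity) (by simp)
      (by rw [sub_zero]; exact sqrt_mul_le_rpow hq (Real.rpow_zero q).ge hy0 hy (by linarith))
  calc y / √q ≤ q ^ τ * √(x * y) / √q := by
        gcongr
        exact hy'.trans (by gcongr)
    _ = q ^ (τ - 1 / 2) * √(x * y) := by
        rw [Real.rpow_sub hq0, ← Real.sqrt_eq_rpow]
        ring

end RpowBounds

section Paley

variable {p : ℕ}

theorem ringChar_zmod_ne_two_of_odd (hodd : Odd p) : ringChar (ZMod p) ≠ 2 := by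
  rw [ZMod.ringChar_zmod_n]
  rintro rfl
  exact Nat.not_odd_iff_even.2 even_two hodd

theorem paleyPsi_eq_stdAddChar [NeZero p] (x : ZMod p) : paleyPsi p x = ZMod.stdAddChar x := by
  rw [ZMod.stdAddChar_apply, ZMod.toCircle_apply, paleyPsi]

theorem paleyChar_cast_eq [Fact p.Prime] (x : ZMod p) :
    (paleyChar p x : ℂ) = complexQuadraticChar (ZMod p) x := by
  classical
  simp [paleyChar, complexQuadraticChar, quadraticChar_apply, quadraticCharFun]

theorem one_add_two_mul_sum_stdAddChar_residues [Fact p.Prime] (hodd : Odd p)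
    {b : Fin ((p - 1) / 2) → ZMod p} (hb : Function.Injective b)
    (hbr : Set.range b = {x : ZMod p | x ≠ 0 ∧ IsSquare x}) {x : ZMod p} (hx : x ≠ 0) :
    1 + 2 * ∑ k, ZMod.stdAddChar (b k * x) =
      complexQuadraticChar (ZMod p) x *
        gaussSum (complexQuadraticChar (ZMod p)) ZMod.stdAddChar := by
  have hF := ringChar_zmod_ne_two_of_odd hodd
  have hQ : ({y | y ≠ 0 ∧ IsSquare y} : Finset (ZMod p)) = univ.image b := by
    ext y
    simpa using (Set.ext_iff.1 hbr y).symm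
  rw [← sum_addChar_sq_mul hF (ZMod.isPrimitive_stdAddChar p) hx,
    sum_sq_eq_add_two_smul_sum_isSquare hF (fun y => ZMod.stdAddChar (y * x)), hQ,
    sum_image hb.injOn, zero_mul, AddChar.map_zero_eq_one, nsmul_eq_mul, Nat.cast_ofNat]

theorem herm_paleyMatrix_castSucc [NeZero p] (a : Fin p → ZMod p)
    (b : Fin ((p - 1) / 2) → ZMod p) (i j : Fin p) :
    herm ((paleyMatrix p a b)ᵀ i.castSucc) ((paleyMatrix p a b)ᵀ j.castSucc) =
      (1 + 2 * ∑ k, ZMod.stdAddChar (b k * (a i - a j))) / p := by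
  have hsp : (√p : ℂ) ^ 2 = p := by exact_mod_cast Real.sq_sqrt (Nat.cast_nonneg p)
  have hs2 : (√2 : ℂ) ^ 2 = 2 := by exact_mod_cast Real.sq_sqrt zero_le_two
  rw [herm, Fin.sum_univ_succ]
  simp only [Matrix.transpose_apply, paleyMatrix, Fin.val_castSucc, Fin.is_lt, ↓reduceIte,
    one_div, ↓reduceDIte, Nat.ofNat_nonneg, Real.sqrt_div, Complex.ofReal_div, Fin.eta,
    paleyPsi_eq_stdAddChar, Fin.cases_zero, map_inv₀, Complex.conj_ofReal, Fin.cases_succ,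
    map_mul, map_div₀, ← AddChar.map_neg_eq_conj]
  simp only [mul_sub, AddChar.map_sub_eq_div, div_eq_mul_inv, mul_sum, ← AddChar.map_neg_eq_inv]
  field_simp
  rw [hsp, hs2, add_div, sum_div]

theorem norm_herm_paleyMatrix_last_castSucc (a : Fin p → ZMod p)
    (b : Fin ((p - 1) / 2) → ZMod p) (j : Fin p) :
    ‖herm ((paleyMatrix p a b)ᵀ (Fin.last p)) ((paleyMatrix p a b)ᵀ j.castSucc)‖ = 1 / √p := by
  rw [herm, Fin.sum_univ_succ]
  simp only [Matrix.transpose_apply, paleyMatrix, Fin.cases_zero, Fin.cases_succ, Fin.val_last,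
    Fin.val_castSucc, Fin.is_lt, lt_self_iff_false, ↓reduceIte, ↓reduceDIte, zero_mul,
    sum_const_zero, add_zero, norm_mul, Complex.norm_conj]
  split_ifs <;> simp

theorem norm_sum_herm_paleyMatrix_last_le (a : Fin p → ZMod p) (b : Fin ((p - 1) / 2) → ZMod p)
    (J : Finset (Fin p)) :
    ‖∑ j ∈ J, herm ((paleyMatrix p a b)ᵀ (Fin.last p)) ((paleyMatrix p a b)ᵀ j.castSucc)‖ ≤
      #J / √p :=
  calc _ ≤ ∑ j ∈ J,
        ‖herm ((paleyMatrix p a b)ᵀ (Fin.last p)) ((paleyMatrix p a b)ᵀ j.castSucc)‖ :=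
        norm_sum_le _ _
    _ = #J / √p := by simp [norm_herm_paleyMatrix_last_castSucc, div_eq_mul_inv]

theorem abs_paleyChar_le_one (x : ZMod p) : |(paleyChar p x : ℝ)| ≤ 1 := by
  unfold paleyChar
  split_ifs <;> norm_num

theorem abs_sum_paleyChar_le_card_mul (S T : Finset (ZMod p)) :
    |∑ s ∈ S, ∑ t ∈ T, (paleyChar p (s - t) : ℝ)| ≤ #S * #T :=
  calc |∑ s ∈ S, ∑ t ∈ T, (paleyChar p (s - t) : ℝ)|
      ≤ ∑ s ∈ S, ∑ t ∈ T, |(paleyChar p (s - t) : ℝ)| :=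
        (abs_sum_le_sum_abs _ _).trans (sum_le_sum fun _ _ => abs_sum_le_sum_abs _ _)
    _ ≤ ∑ s ∈ S, ∑ t ∈ T, (1 : ℝ) := by gcongr; exact abs_paleyChar_le_one _
    _ = #S * #T := by simp

theorem abs_sum_paleyChar_le [NeZero p] {α β₀ τ : ℝ} (hP : PropP p α β₀) (hτ : α + β₀ ≤ τ)
    {S T : Finset (ZMod p)} (hS : (#S : ℝ) ≤ p ^ (τ + β₀)) (hT : (#T : ℝ) ≤ p ^ (τ + β₀)) :
    |∑ s ∈ S, ∑ t ∈ T, (paleyChar p (s - t) : ℝ)| ≤ p ^ τ * √(#S * #T) := by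
  have hp1 : (1 : ℝ) ≤ p := Nat.one_le_cast.2 NeZero.one_le
  have hp0 : (0 : ℝ) < p := by linarith
  have hST : (0 : ℝ) ≤ #S * #T := by positivity
  by_cases hlarge : (p : ℝ) ^ α < #S ∧ (p : ℝ) ^ α < #T
  · refine le_rpow_mul_sqrt hp0 hST ((hP S T hlarge.1 hlarge.2).trans_eq (mul_assoc _ _ _)) ?_
    exact sqrt_mul_le_rpow hp1 hS (Nat.cast_nonneg _) hT (by linarith)
  · refine le_rpow_mul_sqrt (e := 0) hp0 hST
      (by simpa using abs_sum_paleyChar_le_card_mul S T) ?_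
    rw [sub_zero]
    rcases not_and_or.1 hlarge with hS' | hT'
    · exact sqrt_mul_le_rpow hp1 (not_lt.1 hS') (Nat.cast_nonneg _) hT (by linarith)
    · rw [mul_comm]
      exact sqrt_mul_le_rpow hp1 (not_lt.1 hT') (Nat.cast_nonneg _) hS (by linarith)

variable [Fact p.Prime]

theorem sum_herm_paleyMatrix_castSucc (hodd : Odd p) {a : Fin p → ZMod p}
    (ha : Function.Injective a) {b : Fin ((p - 1) / 2) → ZMod p} (hb : Function.Injective b)
    (hbr : Set.range b = {x : ZMod p | x ≠ 0 ∧ IsSquare x}) {I J : Finset (Fin p)}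
    (hIJ : Disjoint I J) :
    ∑ i ∈ I, ∑ j ∈ J, herm ((paleyMatrix p a b)ᵀ i.castSucc) ((paleyMatrix p a b)ᵀ j.castSucc) =
      ((∑ s ∈ I.image a, ∑ t ∈ J.image a, (paleyChar p (s - t) : ℝ) : ℝ) : ℂ) *
        (gaussSum (complexQuadraticChar (ZMod p)) ZMod.stdAddChar / p) := by
  rw [sum_image ha.injOn, Complex.ofReal_sum, sum_mul]
  refine sum_congr rfl fun i hi => ?_
  rw [sum_image ha.injOn, Complex.ofReal_sum, sum_mul]
  refine sum_congr rfl fun j hj => ?_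
  have hij : i ≠ j := fun h => disjoint_left.1 hIJ hi (h ▸ hj)
  rw [herm_paleyMatrix_castSucc, one_add_two_mul_sum_stdAddChar_residues hodd hb hbr
    (sub_ne_zero.2 (ha.ne hij)), Complex.ofReal_intCast, paleyChar_cast_eq]
  ring

theorem norm_sum_herm_paleyMatrix_castSucc_le (hodd : Odd p) {a : Fin p → ZMod p}
    (ha : Function.Injective a) {b : Fin ((p - 1) / 2) → ZMod p} (hb : Function.Injective b)
    (hbr : Set.range b = {x : ZMod p | x ≠ 0 ∧ IsSquare x}) {α β₀ τ : ℝ}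
    (hP : PropP p α β₀) (hτ : α + β₀ ≤ τ) {I J : Finset (Fin p)} (hIJ : Disjoint I J)
    (hI : (#I : ℝ) ≤ p ^ (τ + β₀)) (hJ : (#J : ℝ) ≤ p ^ (τ + β₀)) :
    ‖∑ i ∈ I, ∑ j ∈ J,
        herm ((paleyMatrix p a b)ᵀ i.castSucc) ((paleyMatrix p a b)ᵀ j.castSucc)‖ ≤
      p ^ (τ - 1 / 2) * √(#I * #J) := by
  have hp0 : (0 : ℝ) < p := Nat.cast_pos.2 (Fact.out : p.Prime).pos
  have hχ : complexQuadraticChar (ZMod p) ≠ 1 :=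
    (MulChar.ringHomComp_ne_one_iff Int.cast_injective).2
      (quadraticChar_ne_one (ringChar_zmod_ne_two_of_odd hodd))
  have hchar := abs_sum_paleyChar_le hP hτ (S := I.image a) (T := J.image a)
    (by rwa [card_image_of_injective _ ha]) (by rwa [card_image_of_injective _ ha])
  rw [card_image_of_injective _ ha, card_image_of_injective _ ha] at hchar
  rw [sum_herm_paleyMatrix_castSucc hodd ha hb hbr hIJ, norm_mul, Complex.norm_real,
    Real.norm_eq_abs, norm_div, norm_gaussSum hχ (ZMod.isPrimitive_stdAddChar p), ZMod.card,
    Complex.norm_natCast]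
  calc _ ≤ p ^ τ * √(#I * #J) * (√p / p) := by gcongr
    _ = _ := by
      rw [Real.sqrt_div_self', Real.rpow_sub hp0, ← Real.sqrt_eq_rpow]
      ring

end Paley

theorem paley_flat_rip_general (p : ℕ) [Fact p.Prime] (hodd : Odd p)
    (a : Fin p → ZMod p) (ha : Function.Bijective a)
    (b : Fin ((p - 1) / 2) → ZMod p) (hb : Function.Injective b)
    (hbr : Set.range b = {x : ZMod p | x ≠ 0 ∧ IsSquare x})
    (α β₀ τ : ℝ) (hα0 : 0 < α)
    (hP : PropP p α β₀)
    (hτl : max (α + β₀) (1 / 2 - β₀) < τ) :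
    ∀ I J : Finset (Fin (p + 1)), Disjoint I J →
      (I.card : ℝ) ≤ (p : ℝ) ^ (τ + β₀) → (J.card : ℝ) ≤ (p : ℝ) ^ (τ + β₀) →
      ‖herm (fun m => ∑ i ∈ I, paleyMatrix p a b m i)
          (fun m => ∑ j ∈ J, paleyMatrix p a b m j)‖ ≤
        2 * (p : ℝ) ^ (τ - 1 / 2) * Real.sqrt ((I.card : ℝ) * (J.card : ℝ)) := by
  intro I J hIJ hI hJ
  wlog hJ_last : Fin.last p ∉ J generalizing I J
  · rw [norm_herm_comm, mul_comm (I.card : ℝ)]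
    exact this J I hIJ.symm hJ hI (disjoint_right.1 hIJ (not_not.1 hJ_last))
  have hτ : α + β₀ ≤ τ := (le_max_left _ _).trans hτl.le
  have hp1 : (1 : ℝ) ≤ p := Nat.one_le_cast.2 NeZero.one_le
  set I₀ : Finset (Fin p) := {i | i.castSucc ∈ I}
  set J₀ : Finset (Fin p) := {j | j.castSucc ∈ J}
  have hI₀ : (#I₀ : ℝ) ≤ #I := by exact_mod_cast card_filter_castSucc_mem_le I
  have hJ₀ : (#J₀ : ℝ) ≤ #J := by exact_mod_cast card_filter_castSucc_mem_le J
  rw [herm_sum_columns, Fin.sum_finset_eq_sum_castSucc_add I]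
  simp only [Fin.sum_finset_eq_sum_castSucc_add J, if_neg hJ_last, add_zero]
  calc _ ≤ _ := norm_add_le _ _
    _ ≤ p ^ (τ - 1 / 2) * √(#I * #J) + p ^ (τ - 1 / 2) * √(#I * #J) := add_le_add ?_ ?_
    _ = _ := by ring
  · refine (norm_sum_herm_paleyMatrix_castSucc_le hodd ha.injective hb hbr hP hτ
      (disjoint_filter.2 fun _ _ => (disjoint_left.1 hIJ ·)) (hI₀.trans hI) (hJ₀.trans hJ)).trans ?_
    gcongr
  · split_ifs with hI_last
    · have hI1 : (1 : ℝ) ≤ #I := by exact_mod_cast one_le_card.2 ⟨_, hI_last⟩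
      refine (norm_sum_herm_paleyMatrix_last_le a b J₀).trans <|
        (div_sqrt_le_rpow_mul_sqrt hp1 (by linarith) hI1 (Nat.cast_nonneg _)
          (hJ₀.trans hJ)).trans ?_
      gcongr
    · simpa using by positivity

theorem paley_flat_rip (p : ℕ) [Fact p.Prime] (hodd : Odd p)
    (a : Fin p → ZMod p) (ha : Function.Bijective a) (ha0 : a 0 = 0)
    (b : Fin ((p - 1) / 2) → ZMod p) (hb : Function.Injective b)
    (hbr : Set.range b = {x : ZMod p | x ≠ 0 ∧ IsSquare x})
    (α β₀ τ : ℝ) (hα0 : 0 < α) (hα : α < 1 / 2) (hβ₀ : 0 < β₀) (hαβ : α + β₀ < 1 / 2)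
    (hP : PropP p α β₀)
    (hτl : max (α + β₀) (1 / 2 - β₀) < τ) (hτr : τ < 1 / 2) :
    ∀ I J : Finset (Fin (p + 1)), Disjoint I J →
      (I.card : ℝ) ≤ (p : ℝ) ^ (τ + β₀) → (J.card : ℝ) ≤ (p : ℝ) ^ (τ + β₀) →
      ‖herm (fun m => ∑ i ∈ I, paleyMatrix p a b m i)
          (fun m => ∑ j ∈ J, paleyMatrix p a b m j)‖ ≤
        2 * (p : ℝ) ^ (τ - 1 / 2) * Real.sqrt ((I.card : ℝ) * (J.card : ℝ)) :=
  paley_flat_rip_general p hodd a ha b hb hbr α β₀ τ hα0 hP hτl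
end

section
/- Let p be an odd prime and let 0 < α < 1/2. Suppose there exists β > 0 with α + β < 1/2 such that property P(α, β) holds for p. Let τ be any real number with α + β < τ < 1/2. Then for every pair of subsets S, T ⊆ F_p with |S| ≤ p^{τ+β} and |T| ≤ p^{τ+β}, one has |∑_{s∈S, t∈T} χ(s−t)| ≤ p^τ · √(|S||T|). -/
open Finset

theorem double_char_sum_bound (p : ℕ) [Fact p.Prime] (hodd : Odd p)
    (α β τ : ℝ) (hα0 : 0 < α) (hα : α < 1 / 2) (hβ : 0 < β) (hαβ : α + β < 1 / 2)
    (hP : PropP p α β) (hτl : α + β < τ) (hτr : τ < 1 / 2)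
    (S T : Finset (ZMod p))
    (hS : (S.card : ℝ) ≤ (p : ℝ) ^ (τ + β)) (hT : (T.card : ℝ) ≤ (p : ℝ) ^ (τ + β)) :
    |∑ s ∈ S, ∑ t ∈ T, (paleyChar p (s - t) : ℝ)| ≤
      (p : ℝ) ^ τ * Real.sqrt ((S.card : ℝ) * (T.card : ℝ)) := by
  have hp1 : (1:ℝ) < p := by exact_mod_cast (Fact.out : p.Prime).one_lt
  have hp0 : (0:ℝ) < p := lt_trans one_pos hp1
  have ha0 : (0:ℝ) ≤ S.card := Nat.cast_nonneg _
  have hb0 : (0:ℝ) ≤ T.card := Nat.cast_nonneg _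
  set a : ℝ := (S.card : ℝ)
  set b : ℝ := (T.card : ℝ)
  have hab0 : (0:ℝ) ≤ a * b := mul_nonneg ha0 hb0
  have hsq : Real.sqrt (a * b) * Real.sqrt (a * b) = a * b := Real.mul_self_sqrt hab0
  have hsqnn : (0:ℝ) ≤ Real.sqrt (a * b) := Real.sqrt_nonneg _
  have htriv : |∑ s ∈ S, ∑ t ∈ T, (paleyChar p (s - t) : ℝ)| ≤ a * b := by
    calc |∑ s ∈ S, ∑ t ∈ T, (paleyChar p (s - t) : ℝ)|
        ≤ ∑ s ∈ S, |∑ t ∈ T, (paleyChar p (s - t) : ℝ)| := Finset.abs_sum_le_sum_abs _ _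
      _ ≤ ∑ s ∈ S, ∑ t ∈ T, |(paleyChar p (s - t) : ℝ)| := by
          gcongr with s hs; exact Finset.abs_sum_le_sum_abs _ _
      _ ≤ ∑ s ∈ S, ∑ t ∈ T, (1:ℝ) := by
          gcongr with s hs t ht
          unfold paleyChar
          split_ifs <;> simp
      _ = a * b := by simp [a, b]
  -- helper for the "small" cases
  have hsmall : a * b ≤ (p:ℝ) ^ (α + (τ + β)) →
      |∑ s ∈ S, ∑ t ∈ T, (paleyChar p (s - t) : ℝ)| ≤ (p:ℝ) ^ τ * Real.sqrt (a * b) := by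
    intro h
    have h2τ : (p:ℝ) ^ (α + (τ + β)) ≤ (p:ℝ) ^ (2 * τ) := by
      apply Real.rpow_le_rpow_of_exponent_le hp1.le
      linarith
    have hsqle : Real.sqrt (a * b) ≤ (p:ℝ) ^ τ := by
      have : Real.sqrt (a * b) ≤ Real.sqrt ((p:ℝ) ^ (2 * τ)) :=
        Real.sqrt_le_sqrt (le_trans h h2τ)
      calc Real.sqrt (a * b) ≤ Real.sqrt ((p:ℝ) ^ (2 * τ)) := this
        _ = (p:ℝ) ^ τ := by
            rw [show (2:ℝ) * τ = τ * 2 by ring, Real.rpow_mul hp0.le,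
              Real.rpow_two, Real.sqrt_sq (Real.rpow_nonneg hp0.le _)]
    calc |∑ s ∈ S, ∑ t ∈ T, (paleyChar p (s - t) : ℝ)| ≤ a * b := htriv
      _ = Real.sqrt (a * b) * Real.sqrt (a * b) := hsq.symm
      _ ≤ (p:ℝ) ^ τ * Real.sqrt (a * b) := by
          exact mul_le_mul_of_nonneg_right hsqle hsqnn
  by_cases hSa : (p:ℝ) ^ α < a
  · by_cases hTb : (p:ℝ) ^ α < b
    · -- main case: apply PropP
      have hmain := hP S T hSa hTb
      have hsqle : Real.sqrt (a * b) ≤ (p:ℝ) ^ (τ + β) := by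
        have : a * b ≤ (p:ℝ) ^ (τ + β) * (p:ℝ) ^ (τ + β) :=
          mul_le_mul hS hT hb0 (Real.rpow_nonneg hp0.le _)
        have h' : Real.sqrt (a * b) ≤
            Real.sqrt ((p:ℝ) ^ (τ + β) * (p:ℝ) ^ (τ + β)) := Real.sqrt_le_sqrt this
        rwa [Real.sqrt_mul_self (Real.rpow_nonneg hp0.le _)] at h'
      calc |∑ s ∈ S, ∑ t ∈ T, (paleyChar p (s - t) : ℝ)|
          ≤ (p:ℝ) ^ (-β) * a * b := hmain
        _ = (p:ℝ) ^ (-β) * (Real.sqrt (a * b) * Real.sqrt (a * b)) := by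
            rw [hsq]; ring
        _ ≤ (p:ℝ) ^ (-β) * ((p:ℝ) ^ (τ + β) * Real.sqrt (a * b)) := by
            have hpn : (0:ℝ) ≤ (p:ℝ) ^ (-β) := Real.rpow_nonneg hp0.le _
            exact mul_le_mul_of_nonneg_left
              (mul_le_mul_of_nonneg_right hsqle hsqnn) hpn
        _ = (p:ℝ) ^ τ * Real.sqrt (a * b) := by
            rw [← mul_assoc, ← Real.rpow_add hp0]
            norm_num
    · push_neg at hTb
      apply hsmall
      calc a * b ≤ (p:ℝ) ^ (τ + β) * (p:ℝ) ^ α :=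
            mul_le_mul hS hTb hb0 (Real.rpow_nonneg hp0.le _)
        _ = (p:ℝ) ^ (α + (τ + β)) := by rw [← Real.rpow_add hp0]; ring_nf
  · push_neg at hSa
    apply hsmall
    calc a * b ≤ (p:ℝ) ^ α * (p:ℝ) ^ (τ + β) :=
          mul_le_mul hSa hT hb0 (Real.rpow_nonneg hp0.le _)
      _ = (p:ℝ) ^ (α + (τ + β)) := by rw [← Real.rpow_add hp0]
end

section
/- Let Φ be an M×N complex matrix whose columns all have unit ℓ2-norm, and suppose the coherence of Φ satisfies μ(Φ) = μ. Then for every K ≤ M with (K−1)·μ < 1, the matrix Φ has the (K, (K−1)μ)-restricted isometry property. -/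
/-!
Write `Φ x = ∑ⱼ xⱼ ψⱼ` in terms of the columns `ψⱼ` and expand
`‖Φ x‖² = ∑ⱼ ∑ₖ conj xⱼ xₖ ⟪ψⱼ, ψₖ⟫`. The diagonal terms add up to `‖x‖²` because the columns are
unit vectors, and the off-diagonal terms are at most `μ ∑_{j ≠ k} |xⱼ| |xₖ| = μ ((∑ⱼ |xⱼ|)² - ‖x‖²)`
in modulus. For `K`-sparse `x`, Cauchy–Schwarz gives `(∑ⱼ |xⱼ|)² ≤ K ‖x‖²`, so `‖Φ x‖²` differs
from `‖x‖²` by at most `(K - 1) μ ‖x‖²`.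
-/

open Finset

/-- `x` has at most `K` nonzero entries. -/
def SparseLe {N : ℕ} (K : ℕ) (x : Fin N → ℂ) : Prop :=
  ∃ s : Finset (Fin N), s.card ≤ K ∧ ∀ j ∉ s, x j = 0

/-- The `(K, δ)`-restricted isometry property. -/
def RIP {M N : ℕ} (Φ : Matrix (Fin M) (Fin N) ℂ) (K : ℕ) (δ : ℝ) : Prop :=
  ∀ x : Fin N → ℂ, SparseLe K x →
    (1 - δ) * ∑ j, ‖x j‖ ^ 2 ≤ ∑ m, ‖∑ j, Φ m j * x j‖ ^ 2 ∧
      ∑ m, ‖∑ j, Φ m j * x j‖ ^ 2 ≤ (1 + δ) * ∑ j, ‖x j‖ ^ 2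

open scoped InnerProductSpace ComplexConjugate

theorem Finset.sum_sum_erase_mul_eq {ι R : Type*} [DecidableEq ι] [CommRing R]
    (s : Finset ι) (a : ι → R) :
    ∑ j ∈ s, ∑ k ∈ s.erase j, a j * a k = (∑ j ∈ s, a j) ^ 2 - ∑ j ∈ s, a j ^ 2 := by
  rw [sq, sum_mul, ← sum_sub_distrib]
  refine sum_congr rfl fun j hj => ?_
  rw [← mul_sum, sum_erase_eq_sub hj]
  ring

section InnerProductSpace

variable {𝕜 E ι : Type*} [RCLike 𝕜] [NormedAddCommGroup E] [InnerProductSpace 𝕜 E]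
  [Fintype ι]

theorem norm_sq_sum_smul_eq (v : ι → E) (c : ι → 𝕜) :
    (‖∑ j, c j • v j‖ ^ 2 : 𝕜) = ∑ j, ∑ k, conj (c j) * c k * ⟪v j, v k⟫_𝕜 := by
  rw [← inner_self_eq_norm_sq_to_K, sum_inner]
  simp_rw [inner_sum, inner_smul_left, inner_smul_right, mul_assoc]

theorem norm_sq_sum_smul_eq_add_offDiag [DecidableEq ι] (v : ι → E) (hv : ∀ j, ‖v j‖ = 1)
    (c : ι → 𝕜) :
    (‖∑ j, c j • v j‖ ^ 2 : 𝕜) = ∑ j, (‖c j‖ ^ 2 : 𝕜) +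
      ∑ j, ∑ k ∈ univ.erase j, conj (c j) * c k * ⟪v j, v k⟫_𝕜 := by
  rw [norm_sq_sum_smul_eq, ← sum_add_distrib]
  refine sum_congr rfl fun j _ => ?_
  rw [← add_sum_erase _ _ (mem_univ j), inner_self_eq_norm_sq_to_K, hv, RCLike.conj_mul]
  simp

theorem abs_norm_sq_sum_smul_sub_le [DecidableEq ι] (v : ι → E) (hv : ∀ j, ‖v j‖ = 1) {μ : ℝ}
    (hμ : ∀ j k, j ≠ k → ‖⟪v j, v k⟫_𝕜‖ ≤ μ) (c : ι → 𝕜) :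
    |‖∑ j, c j • v j‖ ^ 2 - ∑ j, ‖c j‖ ^ 2| ≤
      μ * ((∑ j, ‖c j‖) ^ 2 - ∑ j, ‖c j‖ ^ 2) := by
  have hcast : ((‖∑ j, c j • v j‖ ^ 2 - ∑ j, ‖c j‖ ^ 2 : ℝ) : 𝕜) =
      ∑ j, ∑ k ∈ univ.erase j, conj (c j) * c k * ⟪v j, v k⟫_𝕜 := by
    push_cast
    rw [norm_sq_sum_smul_eq_add_offDiag v hv, add_sub_cancel_left]
  calc |‖∑ j, c j • v j‖ ^ 2 - ∑ j, ‖c j‖ ^ 2|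
      = ‖∑ j, ∑ k ∈ univ.erase j, conj (c j) * c k * ⟪v j, v k⟫_𝕜‖ := by
        rw [← hcast, RCLike.norm_ofReal]
    _ ≤ ∑ j, ∑ k ∈ univ.erase j, ‖conj (c j) * c k * ⟪v j, v k⟫_𝕜‖ :=
        (norm_sum_le _ _).trans (sum_le_sum fun j _ => norm_sum_le _ _)
    _ ≤ ∑ j, ∑ k ∈ univ.erase j, μ * (‖c j‖ * ‖c k‖) := by
        refine sum_le_sum fun j _ => sum_le_sum fun k hk => ?_
        rw [norm_mul, norm_mul, RCLike.norm_conj, mul_comm μ]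
        exact mul_le_mul_of_nonneg_left (hμ j k (ne_of_mem_erase hk).symm) (by positivity)
    _ = μ * ((∑ j, ‖c j‖) ^ 2 - ∑ j, ‖c j‖ ^ 2) := by
        simp_rw [← sum_sum_erase_mul_eq, mul_sum]

end InnerProductSpace

theorem SparseLe.sq_sum_norm_le {N K : ℕ} {x : Fin N → ℂ} (hx : SparseLe K x) :
    (∑ j, ‖x j‖) ^ 2 ≤ K * ∑ j, ‖x j‖ ^ 2 := by
  obtain ⟨s, hsK, hs⟩ := hx
  calc (∑ j, ‖x j‖) ^ 2 = (∑ j ∈ s, ‖x j‖) ^ 2 := by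
        rw [sum_subset (subset_univ s) fun j _ hj => by simp [hs j hj]]
    _ ≤ #s * ∑ j ∈ s, ‖x j‖ ^ 2 := sq_sum_le_card_mul_sum_sq
    _ ≤ K * ∑ j, ‖x j‖ ^ 2 := by
        gcongr
        exact subset_univ s

section Columns

variable {M N : ℕ} (Φ : Matrix (Fin M) (Fin N) ℂ)

def euclideanCol (j : Fin N) : EuclideanSpace ℂ (Fin M) :=
  WithLp.toLp 2 fun m => Φ m j

theorem norm_euclideanCol_sq (j : Fin N) : ‖euclideanCol Φ j‖ ^ 2 = ∑ m, ‖Φ m j‖ ^ 2 :=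
  EuclideanSpace.norm_sq_eq _

-- Mathlib's inner product is conjugate-linear in the first slot, unlike `herm`: the two differ
-- by a conjugation.
theorem norm_inner_euclideanCol (j k : Fin N) :
    ‖⟪euclideanCol Φ j, euclideanCol Φ k⟫_ℂ‖ = ‖herm (fun m => Φ m j) (fun m => Φ m k)‖ := by
  rw [← Complex.norm_conj, herm, PiLp.inner_apply, map_sum]
  simp [euclideanCol, mul_comm]

theorem norm_sq_sum_smul_euclideanCol (x : Fin N → ℂ) :
    ‖∑ j, x j • euclideanCol Φ j‖ ^ 2 = ∑ m, ‖∑ j, Φ m j * x j‖ ^ 2 := by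
  rw [EuclideanSpace.norm_sq_eq]
  simp [euclideanCol, mul_comm]

end Columns

theorem coherence_implies_rip_general (M N K : ℕ) (μ : ℝ)
    (Φ : Matrix (Fin M) (Fin N) ℂ)
    (hunit : ∀ j : Fin N, ∑ i, ‖Φ i j‖ ^ 2 = 1)
    (hμ : IsGreatest
      ((fun jk : Fin N × Fin N =>
        ‖herm (fun m => Φ m jk.1) (fun m => Φ m jk.2)‖) ''
          {jk : Fin N × Fin N | jk.1 ≠ jk.2}) μ) :
    RIP Φ K (((K : ℝ) - 1) * μ) := by
  have hμ0 : 0 ≤ μ := by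
    obtain ⟨_, _, rfl⟩ := hμ.1
    exact norm_nonneg _
  have hcol : ∀ j, ‖euclideanCol Φ j‖ = 1 := fun j => by
    rw [← pow_eq_one_iff_of_nonneg (norm_nonneg _) two_ne_zero, norm_euclideanCol_sq, hunit]
  have hcoh : ∀ j k, j ≠ k → ‖⟪euclideanCol Φ j, euclideanCol Φ k⟫_ℂ‖ ≤ μ :=
    fun j k hjk => (norm_inner_euclideanCol Φ j k).trans_le (hμ.2 ⟨(j, k), hjk, rfl⟩)
  intro x hx
  have hdev := abs_le.mp (abs_norm_sq_sum_smul_sub_le _ hcol hcoh x)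
  have hoff : μ * ((∑ j, ‖x j‖) ^ 2 - ∑ j, ‖x j‖ ^ 2) ≤ ((K : ℝ) - 1) * μ * ∑ j, ‖x j‖ ^ 2 := by
    nlinarith [hx.sq_sum_norm_le]
  rw [← norm_sq_sum_smul_euclideanCol]
  constructor <;> linarith [hdev.1, hdev.2]

theorem coherence_implies_rip (M N K : ℕ) (hMN : M ≤ N) (μ : ℝ)
    (Φ : Matrix (Fin M) (Fin N) ℂ)
    (hunit : ∀ j : Fin N, ∑ i, ‖Φ i j‖ ^ 2 = 1)
    (hμ : IsGreatest
      ((fun jk : Fin N × Fin N =>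
        ‖herm (fun m => Φ m jk.1) (fun m => Φ m jk.2)‖) ''
          {jk : Fin N × Fin N | jk.1 ≠ jk.2}) μ)
    (hKM : K ≤ M) (hKμ : ((K : ℝ) - 1) * μ < 1) :
    RIP Φ K (((K : ℝ) - 1) * μ) :=
  coherence_implies_rip_general M N K μ Φ hunit hμ
end

section
/- Let u ≥ 1 be an integer and let A be the u×u complex matrix with A_{j,k} = √−1 for j < k, A_{j,j} = 0, and A_{j,k} = −√−1 for j > k. Then A is Hermitian, all its eigenvalues are real, and A has a real eigenvalue λ with λ² ≥ (u²−1)/3; equivalently, the largest eigenvalue of A² is at least (u²−1)/3. -/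
/-!
A Hermitian matrix satisfies `‖A x‖² ≤ λ² ‖x‖²` for its eigenvalue `λ` of largest absolute value
(expand `x` in an orthonormal eigenbasis). For the all-ones vector `x`, the row sums give
`(A x)_j = i (u - 1 - 2j)`, so `‖A x‖² = ∑ⱼ (u - 1 - 2j)² = u (u² - 1) / 3` while `‖x‖² = u`.
-/

open Finset Matrix Complex

open Module.End in
theorem LinearMap.IsSymmetric.exists_hasEigenvalue_norm_sq_le {𝕜 E : Type*} [RCLike 𝕜]
    [NormedAddCommGroup E] [InnerProductSpace 𝕜 E] [FiniteDimensional 𝕜 E] [Nontrivial E]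
    {T : E →ₗ[𝕜] E} (hT : T.IsSymmetric) (x : E) :
    ∃ μ : ℝ, HasEigenvalue T μ ∧ ‖T x‖ ^ 2 ≤ μ ^ 2 * ‖x‖ ^ 2 := by
  have hn : 0 < Module.finrank 𝕜 E := Module.finrank_pos
  set b := hT.eigenvectorBasis rfl
  set μ := hT.eigenvalues rfl
  obtain ⟨i, -, hi⟩ := exists_max_image univ (fun i => μ i ^ 2) ⟨⟨0, hn⟩, mem_univ _⟩
  refine ⟨μ i, hT.hasEigenvalue_eigenvalues rfl i, ?_⟩
  calc ‖T x‖ ^ 2 = ∑ j, μ j ^ 2 * ‖b.repr x j‖ ^ 2 := by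
        simp only [← b.repr.norm_map, EuclideanSpace.norm_sq_eq, b,
          hT.eigenvectorBasis_apply_self_apply, norm_mul, RCLike.norm_ofReal, mul_pow, sq_abs, μ]
    _ ≤ ∑ j, μ i ^ 2 * ‖b.repr x j‖ ^ 2 :=
      sum_le_sum fun j _ => mul_le_mul_of_nonneg_right (hi j (mem_univ j)) (sq_nonneg _)
    _ = μ i ^ 2 * ‖x‖ ^ 2 := by rw [← mul_sum, ← EuclideanSpace.norm_sq_eq, b.repr.norm_map]

theorem Matrix.hasEigenvector_toEuclideanLin_iff {𝕜 n : Type*} [RCLike 𝕜] [Fintype n]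
    [DecidableEq n] {A : Matrix n n 𝕜} {μ : 𝕜} {v : EuclideanSpace 𝕜 n} :
    Module.End.HasEigenvector (toEuclideanLin A) μ v ↔ v ≠ 0 ∧ A *ᵥ v.ofLp = μ • v.ofLp := by
  rw [Module.End.hasEigenvector_iff, Module.End.mem_eigenspace_iff, and_comm, toLpLin_apply,
    WithLp.ext_iff, WithLp.ofLp_toLp, WithLp.ofLp_smul]

theorem sum_range_sub_two_mul_sq (a : ℝ) (n : ℕ) :
    ∑ j ∈ range n, (a - 2 * j) ^ 2 =
      n * a ^ 2 - 2 * a * n * (n - 1) + 2 * n * (n - 1) * (2 * n - 1) / 3 := by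
  induction n with
  | zero => simp
  | succ n ih => rw [sum_range_succ, ih]; push_cast; ring

theorem sum_fin_sub_one_sub_two_mul_sq (u : ℕ) :
    ∑ j : Fin u, ((u : ℝ) - 1 - 2 * j) ^ 2 = u * ((u : ℝ) ^ 2 - 1) / 3 := by
  rw [Fin.sum_univ_eq_sum_range (fun j => ((u : ℝ) - 1 - 2 * j) ^ 2), sum_range_sub_two_mul_sq]
  ring

def iSignMatrix (u : ℕ) : Matrix (Fin u) (Fin u) ℂ :=
  of fun j k => if (j : ℕ) < (k : ℕ) then I else if j = k then 0 else -I

theorem iSignMatrix_isHermitian (u : ℕ) : (iSignMatrix u).IsHermitian := by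
  ext j k
  rcases lt_trichotomy j k with h | rfl | h
  · simp [iSignMatrix, h, h.not_gt, h.ne']
  · simp [iSignMatrix]
  · simp [iSignMatrix, h, h.not_gt, h.ne']

theorem iSignMatrix_apply_eq_mul_I (u : ℕ) (j k : Fin u) :
    iSignMatrix u j k = ((if j < k then 1 else 0) - (if k < j then 1 else 0)) * I := by
  rcases lt_trichotomy j k with h | rfl | h
  · simp [iSignMatrix, h, h.not_gt]
  · simp [iSignMatrix]
  · simp [iSignMatrix, h, h.not_gt, h.ne']

theorem iSignMatrix_mulVec_one (u : ℕ) (j : Fin u) :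
    (iSignMatrix u *ᵥ 1) j = (((u : ℝ) - 1 - 2 * j : ℝ) : ℂ) * I := by
  simp only [mulVec, dotProduct, Pi.one_apply, mul_one, iSignMatrix_apply_eq_mul_I, ← sum_mul,
    sum_sub_distrib, sum_boole, filter_lt_eq_Ioi, filter_gt_eq_Iio, Fin.card_Ioi, Fin.card_Iio]
  have hj : (j : ℕ) ≤ u - 1 := Nat.le_sub_one_of_lt j.2
  push_cast [Nat.cast_sub hj, Nat.cast_sub (j.pos : 0 < u)]
  ring

theorem norm_sq_iSignMatrix_mulVec_one (u : ℕ) :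
    ‖(WithLp.toLp 2 (iSignMatrix u *ᵥ 1) : EuclideanSpace ℂ (Fin u))‖ ^ 2 =
      u * ((u : ℝ) ^ 2 - 1) / 3 := by
  simp only [EuclideanSpace.norm_sq_eq, iSignMatrix_mulVec_one, norm_mul, norm_I, mul_one,
    norm_real, Real.norm_eq_abs, sq_abs]
  exact sum_fin_sub_one_sub_two_mul_sq u

theorem A_hermitian_large_eigenvalue (u : ℕ) (hu : 1 ≤ u)
    (A : Matrix (Fin u) (Fin u) ℂ)
    (hA : ∀ j k : Fin u, A j k =
      if (j : ℕ) < (k : ℕ) then Complex.I else if j = k then 0 else -Complex.I) :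
    A.IsHermitian ∧
      (∀ (μ : ℂ) (v : Fin u → ℂ), v ≠ 0 → A.mulVec v = μ • v → μ.im = 0) ∧
      ∃ (lam : ℝ) (v : Fin u → ℂ), v ≠ 0 ∧ A.mulVec v = (lam : ℂ) • v ∧
        ((u : ℝ) ^ 2 - 1) / 3 ≤ lam ^ 2 := by
  obtain rfl : A = iSignMatrix u := Matrix.ext hA
  have hT := isSymmetric_toEuclideanLin_iff.mpr (iSignMatrix_isHermitian u)
  refine ⟨iSignMatrix_isHermitian u, fun μ v hv hμ => ?_, ?_⟩
  · have hμ' := Module.End.hasEigenvalue_of_hasEigenvector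
      (hasEigenvector_toEuclideanLin_iff.mpr ⟨(WithLp.toLp_eq_zero 2).not.mpr hv, hμ⟩)
    exact conj_eq_iff_im.mp (hT.conj_eigenvalue_eq_self hμ')
  · have : NeZero u := ⟨by omega⟩
    obtain ⟨lam, hlam, hle⟩ := hT.exists_hasEigenvalue_norm_sq_le (WithLp.toLp 2 1)
    obtain ⟨v, hv⟩ := hlam.exists_hasEigenvector
    obtain ⟨hv0, hv⟩ := hasEigenvector_toEuclideanLin_iff.mp hv
    refine ⟨lam, v.ofLp, (WithLp.toLp_eq_zero 2).not.mp hv0, hv, ?_⟩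
    have h_one : ‖(WithLp.toLp 2 1 : EuclideanSpace ℂ (Fin u))‖ ^ 2 = u := by
      simp [EuclideanSpace.norm_sq_eq]
    rw [toLpLin_apply, WithLp.ofLp_toLp, norm_sq_iSignMatrix_mulVec_one, h_one] at hle
    have hu_pos : (0 : ℝ) < u := by exact_mod_cast hu
    nlinarith
end

section
/- Let p ≡ 3 (mod 4) be a prime. Then every subset U ⊆ F_p that induces a transitive subtournament of the Paley tournament T_p satisfies |U| ≤ 1 + √(2p − 1). -/
open Finset

/-- `U` induces a transitive subtournament of the Paley tournament `T_p` (no directed cycles,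
equivalently the arc relation `χ(x - y) = 1` is transitive on `U`). -/
def IsTransSubtournament (p : ℕ) (U : Finset (ZMod p)) : Prop :=
  ∀ x ∈ U, ∀ y ∈ U, ∀ z ∈ U,
    paleyChar p (x - y) = 1 → paleyChar p (y - z) = 1 → paleyChar p (x - z) = 1

section Char

variable {p : ℕ} [Fact p.Prime]

lemma paleyChar_ne_zero {x : ZMod p} (h : paleyChar p x = 1) : x ≠ 0 := by
  intro hx
  simp [paleyChar, hx] at h

lemma paleyChar_eq_one_iff {x : ZMod p} (hx : x ≠ 0) :
    paleyChar p x = 1 ↔ x ^ (p / 2) = 1 := by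
  unfold paleyChar
  rw [if_neg hx]
  by_cases h : IsSquare x
  · rw [if_pos h]
    simp [(ZMod.euler_criterion p hx).mp h]
  · rw [if_neg h]
    constructor
    · intro h1; exact absurd h1 (by norm_num)
    · intro h1; exact absurd ((ZMod.euler_criterion p hx).mpr h1) h

lemma pow_half_eq_one_or_neg_one {x : ZMod p} (hp2 : p % 2 = 1) (hx : x ≠ 0) :
    x ^ (p / 2) = 1 ∨ x ^ (p / 2) = -1 := by
  have h1 : x ^ (p / 2) * x ^ (p / 2) = 1 := by
    rw [← pow_add]
    have : p / 2 + p / 2 = p - 1 := by omega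
    rw [this]
    exact ZMod.pow_card_sub_one_eq_one hx
  exact mul_self_eq_one_iff.mp h1

lemma paleyChar_total (hp4 : p % 4 = 3) {x y : ZMod p} (hxy : x ≠ y) :
    paleyChar p (x - y) = 1 ∨ paleyChar p (y - x) = 1 := by
  have hp2 : p % 2 = 1 := by omega
  have h0 : x - y ≠ 0 := sub_ne_zero.mpr hxy
  have h0' : y - x ≠ 0 := sub_ne_zero.mpr hxy.symm
  rcases pow_half_eq_one_or_neg_one hp2 h0 with h | h
  · exact Or.inl ((paleyChar_eq_one_iff h0).mpr h)
  · right
    rw [paleyChar_eq_one_iff h0']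
    have hodd : Odd (p / 2) := by rw [Nat.odd_iff]; omega
    have : y - x = -(x - y) := by ring
    rw [this, hodd.neg_pow, h, neg_neg]

lemma trans_mono {U V : Finset (ZMod p)} (hUV : U ⊆ V)
    (h : IsTransSubtournament p V) : IsTransSubtournament p U :=
  fun x hx y hy z hz => h x (hUV hx) y (hUV hy) z (hUV hz)

lemma source_exists (hp4 : p % 4 = 3) :
    ∀ U : Finset (ZMod p), IsTransSubtournament p U → U.Nonempty →
      ∃ a ∈ U, ∀ b ∈ U, b ≠ a → paleyChar p (a - b) = 1 := by
  intro U
  induction U using Finset.cons_induction with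
  | empty => intro _ h; exact absurd h (by simp)
  | cons x s hxs ih =>
    intro htr _
    by_cases hs : s.Nonempty
    · obtain ⟨a, has, hsrc⟩ := ih (trans_mono (Finset.subset_cons _) htr) hs
      have haU : a ∈ Finset.cons x s hxs := Finset.subset_cons _ has
      have hxa : x ≠ a := fun h => hxs (h ▸ has)
      by_cases hc : paleyChar p (x - a) = 1
      · refine ⟨x, Finset.mem_cons_self _ _, fun b hb hbx => ?_⟩
        rcases Finset.mem_cons.mp hb with rfl | hbs
        · exact absurd rfl hbx
        · by_cases hba : b = a
          · exact hba ▸ hc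
          · exact htr x (Finset.mem_cons_self _ _) a haU b hb hc (hsrc b hbs hba)
      · have hax : paleyChar p (a - x) = 1 := (paleyChar_total hp4 hxa).resolve_left hc
        refine ⟨a, haU, fun b hb hba => ?_⟩
        rcases Finset.mem_cons.mp hb with rfl | hbs
        · exact hax
        · exact hsrc b hbs hba
    · refine ⟨x, Finset.mem_cons_self _ _, fun b hb hbx => ?_⟩
      rcases Finset.mem_cons.mp hb with rfl | hbs
      · exact absurd rfl hbx
      · exact absurd ⟨b, hbs⟩ hs

lemma split_exists (hp4 : p % 4 = 3) :
    ∀ (m : ℕ) (U : Finset (ZMod p)), IsTransSubtournament p U → m ≤ U.card →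
      ∃ A ⊆ U, A.card = m ∧ ∀ a ∈ A, ∀ b ∈ U, b ∉ A → paleyChar p (a - b) = 1 := by
  intro m
  induction m with
  | zero => exact fun U _ _ => ⟨∅, Finset.empty_subset _, Finset.card_empty, by simp⟩
  | succ m ih =>
    intro U htr hm
    have hne : U.Nonempty := Finset.card_pos.mp (by omega)
    obtain ⟨a, haU, hsrc⟩ := source_exists hp4 U htr hne
    obtain ⟨A', hA'sub, hA'card, hA'top⟩ :=
      ih (U.erase a) (trans_mono (Finset.erase_subset _ _) htr)
        (by rw [Finset.card_erase_of_mem haU]; omega)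
    have haA' : a ∉ A' := fun h => (Finset.notMem_erase a U) (hA'sub h)
    refine ⟨insert a A', ?_, ?_, ?_⟩
    · exact Finset.insert_subset haU (hA'sub.trans (Finset.erase_subset _ _))
    · rw [Finset.card_insert_of_notMem haA', hA'card]
    · intro x hx b hbU hbA
      have hba : b ≠ a := fun h => hbA (h ▸ Finset.mem_insert_self a A')
      rcases Finset.mem_insert.mp hx with rfl | hxA'
      · exact hsrc b hbU hba
      · exact hA'top x hxA' b (Finset.mem_erase.mpr ⟨hba, hbU⟩)
          (fun h => hbA (Finset.mem_insert_of_mem h))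

end Char

section KeyPoly

open Polynomial

/-- The Hanson–Petridis-style polynomial lemma: if every element of `A` "beats" every `b i`
in the sense that `(a - b i) ^ (p/2) = 1`, then `|A| * n ≤ p / 2`. -/
lemma key_poly (p : ℕ) [Fact p.Prime] (hp2 : p % 2 = 1) {n : ℕ} (hn1 : 1 ≤ n)
    (hnp : n ≤ p / 2) (b : Fin n → ZMod p) (hb : Function.Injective b)
    (A : Finset (ZMod p)) (hA : ∀ a ∈ A, ∀ i, (a - b i) ^ (p / 2) = 1) :
    A.card * n ≤ p / 2 := by
  classical
  have hp3 : 3 ≤ p := by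
    have h2 := (Fact.out : p.Prime).two_le; omega
  set q := p / 2 with hq
  have hq1 : 1 ≤ q := by omega
  -- Vandermonde coefficients
  set M : Matrix (Fin n) (Fin n) (ZMod p) := fun s i => b i ^ (s : ℕ) with hM
  have hdet : M.det ≠ 0 := by
    have hMt : M = (Matrix.vandermonde b).transpose := by
      ext s i; rfl
    rw [hMt, Matrix.det_transpose]
    exact Matrix.det_vandermonde_ne_zero_iff.mpr hb
  have hunit : IsUnit M.det := isUnit_iff_ne_zero.mpr hdet
  set lst : Fin n := ⟨n - 1, by omega⟩ with hlst
  set e : Fin n → ZMod p := Pi.single lst 1 with he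
  set c : Fin n → ZMod p := M⁻¹.mulVec e with hc
  have hMc : M.mulVec c = e := by
    rw [hc, Matrix.mulVec_mulVec, Matrix.mul_nonsing_inv _ hunit, Matrix.one_mulVec]
  -- moments
  have mom : ∀ t : ℕ, t ≤ n - 1 →
      (∑ i, c i * b i ^ t) = if t = n - 1 then (1 : ZMod p) else 0 := by
    intro t ht
    have htn : t < n := by omega
    have h1 := congrFun hMc ⟨t, htn⟩
    have h2 : M.mulVec c ⟨t, htn⟩ = ∑ i, c i * b i ^ t := by
      simp [Matrix.mulVec, dotProduct, hM, mul_comm]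
    rw [h2] at h1
    rw [h1, he, Pi.single_apply, hlst]
    simp [Fin.ext_iff]
  -- shifted moments
  have smom : ∀ (a : ZMod p) (t : ℕ), t ≤ n - 1 →
      (∑ i, c i * (a - b i) ^ t) = if t = n - 1 then (-1 : ZMod p) ^ (n - 1) else 0 := by
    intro a t ht
    have expand : ∀ i : Fin n, (a - b i) ^ t
        = ∑ s ∈ Finset.range (t + 1),
            (a ^ s * (-1 : ZMod p) ^ (t - s) * (t.choose s)) * b i ^ (t - s) := by
      intro i
      rw [sub_eq_add_neg, add_pow]
      refine Finset.sum_congr rfl fun s hs => ?_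
      rw [neg_pow]
      ring
    calc (∑ i, c i * (a - b i) ^ t)
        = ∑ i, ∑ s ∈ Finset.range (t + 1),
            (a ^ s * (-1 : ZMod p) ^ (t - s) * (t.choose s)) * (c i * b i ^ (t - s)) := by
          refine Finset.sum_congr rfl fun i _ => ?_
          rw [expand i, Finset.mul_sum]
          exact Finset.sum_congr rfl fun s _ => by ring
      _ = ∑ s ∈ Finset.range (t + 1),
            (a ^ s * (-1 : ZMod p) ^ (t - s) * (t.choose s)) * (∑ i, c i * b i ^ (t - s)) := by
          rw [Finset.sum_comm]
          exact Finset.sum_congr rfl fun s _ => by rw [Finset.mul_sum]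
      _ = ∑ s ∈ Finset.range (t + 1),
            (a ^ s * (-1 : ZMod p) ^ (t - s) * (t.choose s)) *
              (if t - s = n - 1 then (1 : ZMod p) else 0) := by
          exact Finset.sum_congr rfl fun s hs => by rw [mom (t - s) (by omega)]
      _ = if t = n - 1 then (-1 : ZMod p) ^ (n - 1) else 0 := by
          by_cases htn : t = n - 1
          · rw [if_pos htn]
            rw [Finset.sum_eq_single 0]
            · rw [if_pos (by omega)]
              simp [htn]
            · intro s hs hs0
              rw [if_neg (by rw [Finset.mem_range] at hs; omega), mul_zero]
            · intro h0
              exact absurd (Finset.mem_range.mpr (by omega)) h0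
          · rw [if_neg htn]
            refine Finset.sum_eq_zero fun s hs => ?_
            rw [if_neg (by rw [Finset.mem_range] at hs; omega), mul_zero]
  -- the auxiliary polynomial
  set N := q + (n - 1) with hN
  have hqN : q ≤ N := by omega
  have hNp : N < p := by omega
  set H : Polynomial (ZMod p) :=
    (∑ i, Polynomial.C (c i) * (Polynomial.X - Polynomial.C (b i)) ^ N) -
      Polynomial.C ((-1 : ZMod p) ^ (n - 1)) with hH
  have hcoeff_sum : ∀ d : ℕ,
      (∑ i, Polynomial.C (c i) * (Polynomial.X - Polynomial.C (b i)) ^ N).coeff d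
        = ((-1 : ZMod p) ^ (N - d) * (N.choose d)) * ∑ i, c i * b i ^ (N - d) := by
    intro d
    rw [Polynomial.finset_sum_coeff]
    calc ∑ i, (Polynomial.C (c i) * (Polynomial.X - Polynomial.C (b i)) ^ N).coeff d
        = ∑ i, c i * ((-(b i)) ^ (N - d) * (N.choose d)) := by
          refine Finset.sum_congr rfl fun i _ => ?_
          rw [Polynomial.coeff_C_mul, sub_eq_add_neg, ← Polynomial.C_neg,
            Polynomial.coeff_X_add_C_pow]
      _ = _ := by
          rw [Finset.mul_sum]
          refine Finset.sum_congr rfl fun i _ => ?_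
          rw [neg_pow]; ring
  have hdeg : H.natDegree ≤ q := by
    refine Polynomial.natDegree_le_iff_coeff_eq_zero.mpr fun d hd => ?_
    rw [hH, Polynomial.coeff_sub, hcoeff_sum, Polynomial.coeff_C, if_neg (by omega)]
    by_cases hdN : d ≤ N
    · rw [mom (N - d) (by omega), if_neg (by omega)]
      simp
    · rw [Nat.choose_eq_zero_of_lt (by omega)]
      simp
  have hcoeffq : H.coeff q = (-1 : ZMod p) ^ (n - 1) * (N.choose q) := by
    rw [hH, Polynomial.coeff_sub, hcoeff_sum, Polynomial.coeff_C, if_neg (by omega),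
      show N - q = n - 1 by omega, mom (n - 1) le_rfl, if_pos rfl]
    ring
  have hchoose : ((N.choose q : ZMod p)) ≠ 0 := by
    rw [Ne, ZMod.natCast_eq_zero_iff]
    intro hdvd
    have h3 := Nat.choose_mul_factorial_mul_factorial hqN
    have h2 : p ∣ N.factorial := by
      rw [← h3]
      exact (hdvd.mul_right _).mul_right _
    have h4 := (Nat.Prime.dvd_factorial (Fact.out)).mp h2
    omega
  have hHne : H ≠ 0 := by
    intro h0
    have h1 : ((-1 : ZMod p) ^ (n - 1) * (N.choose q) : ZMod p) = 0 := by
      rw [← hcoeffq, h0, Polynomial.coeff_zero]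
    rcases mul_eq_zero.mp h1 with h | h
    · exact pow_ne_zero _ (neg_ne_zero.mpr one_ne_zero) h
    · exact hchoose h
  -- divisibility by (X - a)^n for a ∈ A
  have hdvd : ∀ a ∈ A, (Polynomial.X - Polynomial.C a) ^ n ∣ H := by
    intro a ha
    have hbase : ∀ i : Fin n, (Polynomial.X : Polynomial (ZMod p)) - Polynomial.C (b i)
        = (Polynomial.X - Polynomial.C a) + Polynomial.C (a - b i) := by
      intro i; rw [Polynomial.C_sub]; ring
    have hexp : (∑ i, Polynomial.C (c i) * (Polynomial.X - Polynomial.C (b i)) ^ N)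
        = ∑ r ∈ Finset.range (N + 1),
            (Polynomial.X - Polynomial.C a) ^ r *
              Polynomial.C ((N.choose r : ZMod p) * ∑ i, c i * (a - b i) ^ (N - r)) := by
      calc (∑ i, Polynomial.C (c i) * (Polynomial.X - Polynomial.C (b i)) ^ N)
          = ∑ i, ∑ r ∈ Finset.range (N + 1), Polynomial.C (c i) *
              ((Polynomial.X - Polynomial.C a) ^ r * Polynomial.C (a - b i) ^ (N - r) *
                (N.choose r : Polynomial (ZMod p))) := by
            refine Finset.sum_congr rfl fun i _ => ?_
            rw [hbase i, add_pow, Finset.mul_sum]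
        _ = ∑ r ∈ Finset.range (N + 1), ∑ i, Polynomial.C (c i) *
              ((Polynomial.X - Polynomial.C a) ^ r * Polynomial.C (a - b i) ^ (N - r) *
                (N.choose r : Polynomial (ZMod p))) := Finset.sum_comm
        _ = _ := by
            refine Finset.sum_congr rfl fun r _ => ?_
            simp only [map_mul, map_sum, map_pow, Polynomial.C_eq_natCast]
            rw [Finset.mul_sum, Finset.mul_sum]
            refine Finset.sum_congr rfl fun i _ => ?_
            ring
    have hlow : ∀ r, r < n → ((N.choose r : ZMod p) * ∑ i, c i * (a - b i) ^ (N - r))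
        = if r = 0 then (-1 : ZMod p) ^ (n - 1) else 0 := by
      intro r hr
      have hsplit : ∀ i : Fin n, (a - b i) ^ (N - r) = (a - b i) ^ (n - 1 - r) := by
        intro i
        have hNr : N - r = q + (n - 1 - r) := by omega
        rw [hNr, pow_add, hA a ha i, one_mul]
      have hsum : (∑ i, c i * (a - b i) ^ (N - r))
          = if n - 1 - r = n - 1 then (-1 : ZMod p) ^ (n - 1) else 0 := by
        rw [Finset.sum_congr rfl (fun i _ => by rw [hsplit i])]
        exact smom a (n - 1 - r) (by omega)
      rw [hsum]
      by_cases hr0 : r = 0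
      · rw [if_pos (by omega), if_pos hr0, hr0]
        simp
      · rw [if_neg (by omega), if_neg hr0, mul_zero]
    have hfirst : (∑ r ∈ Finset.range n,
        (Polynomial.X - Polynomial.C a) ^ r *
          Polynomial.C ((N.choose r : ZMod p) * ∑ i, c i * (a - b i) ^ (N - r)))
        = Polynomial.C ((-1 : ZMod p) ^ (n - 1)) := by
      rw [Finset.sum_congr rfl (fun r hr => by
        rw [hlow r (Finset.mem_range.mp hr)])]
      rw [Finset.sum_eq_single 0]
      · rw [if_pos rfl, pow_zero, one_mul]
      · intro r hr hr0
        rw [if_neg hr0, map_zero, mul_zero]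
      · intro h0
        exact absurd (Finset.mem_range.mpr (by omega)) h0
    have hsplit2 : H = ∑ r ∈ Finset.Ico n (N + 1),
        (Polynomial.X - Polynomial.C a) ^ r *
          Polynomial.C ((N.choose r : ZMod p) * ∑ i, c i * (a - b i) ^ (N - r)) := by
      rw [hH, hexp, Finset.range_eq_Ico,
        ← Finset.sum_Ico_consecutive _ (Nat.zero_le n) (by omega : n ≤ N + 1),
        ← Finset.range_eq_Ico, hfirst]
      ring
    rw [hsplit2]
    refine Finset.dvd_sum fun r hr => ?_
    exact Dvd.dvd.mul_right (pow_dvd_pow _ (Finset.mem_Ico.mp hr).1) _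
  have hprod : (∏ a ∈ A, (Polynomial.X - Polynomial.C a) ^ n) ∣ H := by
    refine Finset.prod_dvd_of_coprime ?_ (fun a ha => hdvd a ha)
    intro a _ a' _ hne
    exact (Polynomial.pairwise_coprime_X_sub_C (Function.injective_id) hne).pow
  have hdegprod : (∏ a ∈ A, (Polynomial.X - Polynomial.C a) ^ n).natDegree = A.card * n := by
    rw [Polynomial.natDegree_prod _ _
      (fun a _ => pow_ne_zero _ (Polynomial.X_sub_C_ne_zero a))]
    simp [Polynomial.natDegree_pow, Polynomial.natDegree_X_sub_C, Finset.sum_const,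
      smul_eq_mul]
  calc A.card * n = _ := hdegprod.symm
    _ ≤ H.natDegree := Polynomial.natDegree_le_of_dvd hprod hHne
    _ ≤ q := hdeg

end KeyPoly

theorem transitive_subtournament_hp_bound (p : ℕ) [Fact p.Prime] (hp4 : p % 4 = 3)
    (U : Finset (ZMod p)) (hU : IsTransSubtournament p U) :
    (U.card : ℝ) ≤ 1 + Real.sqrt (2 * p - 1) := by
  have hp2 : p % 2 = 1 := by omega
  have hp3 : 3 ≤ p := by
    have := (Fact.out : p.Prime).two_le; omega
  set k := U.card with hk
  by_cases hk1 : k ≤ 1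
  · have h1 : (k : ℝ) ≤ 1 := by exact_mod_cast hk1
    have h2 : (0 : ℝ) ≤ Real.sqrt (2 * p - 1) := Real.sqrt_nonneg _
    linarith
  · push_neg at hk1
    -- split U into top part A of size k - k/2 and bottom part B
    obtain ⟨A, hAsub, hAcard, hAtop⟩ := split_exists hp4 (k - k / 2) U hU (by omega)
    set B := U \ A with hB
    have hBcard : B.card = k / 2 := by
      rw [hB, Finset.card_sdiff_of_subset hAsub, hAcard]; omega
    have hkp : k ≤ p := by
      have h := Finset.card_le_univ U
      rw [ZMod.card] at h
      exact h
    -- enumerate B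
    let bfun : Fin B.card → ZMod p := fun i => ((B.equivFin.symm i : B) : ZMod p)
    have hbmem : ∀ i, bfun i ∈ B := fun i => (B.equivFin.symm i).2
    have hbinj : Function.Injective bfun := by
      intro i j hij
      exact B.equivFin.symm.injective (Subtype.ext hij)
    have hn1 : 1 ≤ B.card := by omega
    have hnp : B.card ≤ p / 2 := by
      rw [hBcard]; exact Nat.div_le_div_right hkp
    have hkey : A.card * B.card ≤ p / 2 := by
      refine key_poly p hp2 hn1 hnp bfun hbinj A ?_
      intro a ha i
      have hbB := hbmem i
      have hbU : bfun i ∈ U := (Finset.mem_sdiff.mp hbB).1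
      have hbA : bfun i ∉ A := (Finset.mem_sdiff.mp hbB).2
      have hpc : paleyChar p (a - bfun i) = 1 := hAtop a ha (bfun i) hbU hbA
      exact (paleyChar_eq_one_iff (paleyChar_ne_zero hpc)).mp hpc
    rw [hAcard, hBcard] at hkey
    -- now k^2 ≤ 2p - 1
    have hkk : k * k ≤ 2 * p - 1 := by
      have h4 : ∀ j : ℕ, j * j ≤ 4 * ((j - j / 2) * (j / 2)) + 1 := by
        intro j
        rcases Nat.even_or_odd j with ⟨t, rfl⟩ | ⟨t, rfl⟩
        · have e1 : (t + t) / 2 = t := by omega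
          rw [e1]; have e2 : t + t - t = t := by omega
          rw [e2]; nlinarith
        · have e1 : (2 * t + 1) / 2 = t := by omega
          rw [e1]; have e2 : 2 * t + 1 - t = t + 1 := by omega
          rw [e2]; nlinarith
      have h4 := h4 k
      have h5 : 4 * ((k - k / 2) * (k / 2)) ≤ 4 * (p / 2) := by
        exact Nat.mul_le_mul_left 4 hkey
      have h6 : 4 * (p / 2) + 1 = 2 * p - 1 := by omega
      omega
    have hcast : ((2 * p - 1 : ℕ) : ℝ) = 2 * (p : ℝ) - 1 := by
      have : (1 : ℕ) ≤ 2 * p := by omega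
      push_cast [Nat.cast_sub this]
      ring
    have hsq : (k : ℝ) ^ 2 ≤ 2 * (p : ℝ) - 1 := by
      rw [← hcast]
      have : ((k * k : ℕ) : ℝ) ≤ ((2 * p - 1 : ℕ) : ℝ) := by exact_mod_cast hkk
      calc (k : ℝ) ^ 2 = ((k * k : ℕ) : ℝ) := by push_cast; ring
        _ ≤ _ := this
    have hle : (k : ℝ) ≤ Real.sqrt (2 * (p : ℝ) - 1) := by
      rw [show (2 * (p : ℝ) - 1) = ((k:ℝ)^2 + (2 * (p:ℝ) - 1 - (k:ℝ)^2)) by ring]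
      calc (k : ℝ) = Real.sqrt ((k : ℝ) ^ 2) := by
            rw [Real.sqrt_sq (by positivity)]
        _ ≤ _ := Real.sqrt_le_sqrt (by linarith)
    have h2 : (0 : ℝ) ≤ Real.sqrt (2 * (p : ℝ) - 1) := Real.sqrt_nonneg _
    linarith
end

section
/- Let p ≡ 3 (mod 4) be a prime and let U ⊆ F_p induce a transitive subtournament of the Paley tournament T_p, with |U| = u. Then for every integer x with 1 ≤ x ≤ u−1, one has x(u − x) ≤ (p−1)/2 + x. -/
open Finset

/-!
On a transitive tournament the arcs form a linear order, so `U` splits into a top part `A` of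
size `x` and a bottom part `B` of size `u - x` such that every `a - b` (`a ∈ A`, `b ∈ B`) is a
nonzero square, i.e. `(a - b) ^ m = 1` for `m = (p - 1) / 2` by Euler's criterion.
Stepanov's method then gives `|A| |B| ≤ m + |A| - 1`. With the Lagrange weights
`w c = ∏_{c' ≠ c} (c - c')⁻¹` of `A`, the sum `∑ w c * (c - b) ^ j` is the top divided
difference of `(X - b) ^ j`, i.e. `1` for `j = |A| - 1` and `0` for `j < |A| - 1`. Hence,
using `(c - b) ^ m = 1`, the polynomial `H = ∑ w c * (X + c) ^ (m + |A| - 1) - 1` vanishes to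
order `|A|` at every `-b`, while its coefficient of `X ^ m` is a binomial coefficient below the
characteristic, so `H ≠ 0` and `|A| |B| ≤ deg H ≤ m + |A| - 1`.
-/

open Polynomial Lagrange

section Stepanov

variable {K : Type*} [Field K] [DecidableEq K]

theorem sum_nodalWeight_mul_sub_pow (s : Finset K) (β : K) {j : ℕ} (hj : j < #s) :
    ∑ c ∈ s, nodalWeight s id c * (c - β) ^ j = if j = #s - 1 then 1 else 0 := by
  have hdeg : ((X - C β) ^ j).degree < (#s : WithBot ℕ) := by
    rw [degree_pow, degree_X_sub_C, nsmul_one]; exact_mod_cast hj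
  have h := coeff_eq_sum (Set.injOn_id (s : Set K)) hdeg
  simp only [eval_pow, eval_sub, eval_X, eval_C, id] at h
  simp only [nodalWeight, id, prod_inv_distrib, ← div_eq_inv_mul, ← h]
  split_ifs with hjs
  · rw [← hjs]
    simpa using ((monic_X_sub_C β).pow j).coeff_natDegree
  · exact coeff_eq_zero_of_natDegree_lt (by simp; omega)

noncomputable def stepanovPoly (A : Finset K) (N : ℕ) : K[X] :=
  ∑ c ∈ A, C (nodalWeight A id c) * (X + C c) ^ N - 1

theorem coeff_taylor_stepanovPoly (A : Finset K) (N : ℕ) (r : K) (k : ℕ) :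
    (taylor r (stepanovPoly A N)).coeff k =
      N.choose k * ∑ c ∈ A, nodalWeight A id c * (c + r) ^ (N - k) -
        if k = 0 then 1 else 0 := by
  have hshift : ∀ c : K, taylor r (X + C c) = X + C (c + r) := fun c => by
    rw [taylor_apply, add_comp, X_comp, C_comp, C_add]; ring
  simp only [stepanovPoly, map_sub, map_sum, taylor_mul, taylor_pow, taylor_C, hshift,
    taylor_one, coeff_sub, finsetSum_coeff, coeff_C_mul, coeff_X_add_C_pow, coeff_C, mul_sum]
  congr 1
  exact sum_congr rfl fun c _ => by ring

theorem natDegree_stepanovPoly_le (A : Finset K) (N : ℕ) :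
    (stepanovPoly A N).natDegree ≤ N := by
  refine (natDegree_sub_le _ _).trans (max_le ?_ (by simp))
  exact natDegree_sum_le_of_forall_le _ _ fun c _ =>
    natDegree_C_mul_le _ _ |>.trans (by simp)

theorem X_sub_C_pow_dvd_stepanovPoly {A : Finset K} {m : ℕ} {β : K}
    (h : ∀ c ∈ A, (c - β) ^ m = 1) :
    (X - C (-β)) ^ #A ∣ stepanovPoly A (m + #A - 1) := by
  rw [X_sub_C_pow_dvd_iff, ← taylor_apply, X_pow_dvd_iff]
  intro k hk
  have hpow : ∀ c ∈ A, (c + -β) ^ (m + #A - 1 - k) = (c - β) ^ (#A - 1 - k) := fun c hc => by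
    rw [← sub_eq_add_neg, show m + #A - 1 - k = m + (#A - 1 - k) by omega, pow_add, h c hc,
      one_mul]
  rw [coeff_taylor_stepanovPoly, sum_congr rfl fun c hc => by rw [hpow c hc],
    sum_nodalWeight_mul_sub_pow A β (by omega)]
  rcases Nat.eq_zero_or_pos k with rfl | hk0
  · simp
  · simp [show #A - 1 - k ≠ #A - 1 by omega, hk0.ne']

theorem coeff_stepanovPoly_ne_zero {A : Finset K} (hA : A.Nonempty) {m : ℕ} (hm : 0 < m)
    (hchar : m + #A - 1 < ringChar K) : (stepanovPoly A (m + #A - 1)).coeff m ≠ 0 := by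
  have hA1 := hA.card_pos
  have hprime : (ringChar K).Prime := CharP.char_is_prime_of_two_le K _ (by omega)
  have hchoose : ((m + #A - 1).choose m : K) ≠ 0 := by
    rw [Ne, ringChar.spec, ← hprime.coprime_iff_not_dvd]
    exact hprime.coprime_choose_of_lt hchar (by omega)
  rw [← taylor_zero (stepanovPoly A _), coeff_taylor_stepanovPoly]
  have hpow : ∀ c ∈ A, (c + 0) ^ (m + #A - 1 - m) = (c - 0) ^ (#A - 1) := fun c _ => by
    rw [add_zero, sub_zero, show m + #A - 1 - m = #A - 1 by omega]
  rw [sum_congr rfl fun c hc => by rw [hpow c hc], sum_nodalWeight_mul_sub_pow A 0 (by omega)]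
  simpa [hm.ne'] using hchoose

theorem card_le_of_forall_sub_pow_eq_one {A : Finset K} {m : ℕ} (hm : 0 < m) {β : K}
    (h : ∀ c ∈ A, (c - β) ^ m = 1) : #A ≤ m := by
  have hsub : A.image (· - β) ⊆ nthRootsFinset m (1 : K) := by
    simpa [subset_iff, mem_nthRootsFinset hm] using h
  calc #A = #(A.image (· - β)) := (card_image_of_injective _ (sub_left_injective)).symm
    _ ≤ #(nthRootsFinset m (1 : K)) := card_le_card hsub
    _ ≤ Multiset.card (nthRoots m (1 : K)) := by
      rw [nthRootsFinset_def]; exact Multiset.toFinset_card_le _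
    _ ≤ m := card_nthRoots m 1

theorem card_mul_card_add_one_le {A B : Finset K} {m : ℕ} (hm : 0 < m)
    (hchar : 2 * m ≤ ringChar K)
    (h : ∀ c ∈ A, ∀ β ∈ B, (c - β) ^ m = 1) : #A * #B + 1 ≤ m + #A := by
  rcases A.eq_empty_or_nonempty with rfl | hA
  · simp only [card_empty, zero_mul, add_zero]; omega
  rcases B.eq_empty_or_nonempty with rfl | ⟨β₀, hβ₀⟩
  · simp only [card_empty, mul_zero, zero_add]; omega
  have hAm : #A ≤ m := card_le_of_forall_sub_pow_eq_one hm fun c hc => h c hc β₀ hβ₀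
  have hH : stepanovPoly A (m + #A - 1) ≠ 0 := fun h0 =>
    coeff_stepanovPoly_ne_zero hA hm (by omega) (by rw [h0, coeff_zero])
  have hdvd : ∏ β ∈ B, (X - C (-β)) ^ #A ∣ stepanovPoly A (m + #A - 1) :=
    prod_dvd_of_coprime (fun β _ β' _ hne => ((pairwise_coprime_X_sub_C neg_injective) hne).pow)
      fun β hβ => X_sub_C_pow_dvd_stepanovPoly fun c hc => h c hc β hβ
  have hdeg := (natDegree_le_of_dvd hdvd hH).trans (natDegree_stepanovPoly_le A _)
  rw [natDegree_prod _ _ fun β _ => pow_ne_zero _ (X_sub_C_ne_zero _)] at hdeg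
  simp only [natDegree_pow, natDegree_X_sub_C, mul_one, sum_const, smul_eq_mul] at hdeg
  rw [mul_comm]
  omega

end Stepanov

structure IsTransTournamentOn {α : Type*} (r : α → α → Prop) (s : Finset α) : Prop where
  trans : ∀ x ∈ s, ∀ y ∈ s, ∀ z ∈ s, r x y → r y z → r x z
  total : ∀ x ∈ s, ∀ y ∈ s, x ≠ y → r x y ∨ r y x

namespace IsTransTournamentOn

variable {α : Type*} {r : α → α → Prop} {s t : Finset α}

theorem mono (h : IsTransTournamentOn r s) (hts : t ⊆ s) : IsTransTournamentOn r t where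
  trans x hx y hy z hz := h.trans x (hts hx) y (hts hy) z (hts hz)
  total x hx y hy := h.total x (hts hx) y (hts hy)

theorem exists_forall_rel (h : IsTransTournamentOn r s) (hs : s.Nonempty) :
    ∃ x ∈ s, ∀ y ∈ s, y ≠ x → r x y := by
  induction hs using Finset.Nonempty.cons_induction with
  | singleton a =>
    exact ⟨a, mem_singleton_self a, fun y hy hya => absurd (mem_singleton.1 hy) hya⟩
  | cons a s ha hs ih =>
    obtain ⟨x, hx, hxs⟩ := ih (h.mono (subset_cons ha))
    have hax : a ≠ x := fun hax => ha (hax ▸ hx)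
    have has : a ∈ cons a s ha := mem_cons_self a s
    rcases h.total a has x (mem_cons_of_mem hx) hax with hrax | hrxa
    · refine ⟨a, has, fun y hy hya => ?_⟩
      obtain rfl | hy := mem_cons.1 hy
      · exact absurd rfl hya
      obtain rfl | hyx := eq_or_ne y x
      · exact hrax
      exact h.trans a has x (mem_cons_of_mem hx) y (mem_cons_of_mem hy) hrax (hxs y hy hyx)
    · refine ⟨x, mem_cons_of_mem hx, fun y hy hyx => ?_⟩
      obtain rfl | hy := mem_cons.1 hy
      exacts [hrxa, hxs y hy hyx]

theorem exists_subset_card_eq_forall_rel [DecidableEq α] (h : IsTransTournamentOn r s) {k : ℕ}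
    (hk : k ≤ #s) :
    ∃ t ⊆ s, #t = k ∧ ∀ a ∈ t, ∀ b ∈ s \ t, r a b := by
  induction k with
  | zero => exact ⟨∅, empty_subset s, card_empty, by simp⟩
  | succ k ih =>
    obtain ⟨t, hts, htk, htop⟩ := ih (by omega)
    have hne : (s \ t).Nonempty := by
      rw [← card_pos, card_sdiff_of_subset hts]; omega
    obtain ⟨x, hx, hxtop⟩ := (h.mono sdiff_subset).exists_forall_rel hne
    rw [mem_sdiff] at hx
    refine ⟨insert x t, insert_subset hx.1 hts, by rw [card_insert_of_notMem hx.2, htk], ?_⟩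
    intro a ha b hb
    rw [mem_sdiff, mem_insert, not_or] at hb
    obtain rfl | ha := mem_insert.1 ha
    · exact hxtop b (mem_sdiff.2 ⟨hb.1, hb.2.2⟩) hb.2.1
    · exact htop a ha b (mem_sdiff.2 ⟨hb.1, hb.2.2⟩)

end IsTransTournamentOn

theorem quadraticChar_eq_one_or_neg_eq_one {F : Type*} [Field F] [Fintype F] [DecidableEq F]
    (hF : Fintype.card F % 4 = 3) {a : F} (ha : a ≠ 0) :
    quadraticChar F a = 1 ∨ quadraticChar F (-a) = 1 := by
  have hneg : quadraticChar F (-1) = -1 :=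
    quadraticChar_neg_one_iff_not_isSquare.2 (by rw [FiniteField.isSquare_neg_one_iff]; omega)
  rw [neg_eq_neg_one_mul, map_mul, hneg]
  rcases quadraticChar_dichotomy ha with h | h <;> simp [h]

section Paley

variable {p : ℕ} [Fact p.Prime]

theorem paleyChar_eq_quadraticChar (x : ZMod p) : paleyChar p x = quadraticChar (ZMod p) x := by
  simp only [paleyChar, quadraticChar_apply, quadraticCharFun]
  congr

theorem pow_div_two_eq_one_of_paleyChar_eq_one {d : ZMod p} (h : paleyChar p d = 1) :
    d ^ (p / 2) = 1 := by
  rw [paleyChar_eq_quadraticChar] at h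
  have hd : d ≠ 0 := by rintro rfl; simp at h
  exact (ZMod.euler_criterion p hd).1 ((quadraticChar_one_iff_isSquare hd).1 h)

theorem IsTransSubtournament.isTransTournamentOn (hp4 : p % 4 = 3) {U : Finset (ZMod p)}
    (hU : IsTransSubtournament p U) :
    IsTransTournamentOn (fun x y => paleyChar p (x - y) = 1) U where
  trans := hU
  total x _ y _ hxy := by
    simp only [paleyChar_eq_quadraticChar, ← neg_sub x y]
    exact quadraticChar_eq_one_or_neg_eq_one (by rwa [ZMod.card]) (sub_ne_zero.2 hxy)

end Paley

theorem transitive_subtournament_partition_bound (p : ℕ) [Fact p.Prime] (hp4 : p % 4 = 3)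
    (U : Finset (ZMod p)) (hU : IsTransSubtournament p U) :
    ∀ x : ℕ, 1 ≤ x → x ≤ U.card - 1 → x * (U.card - x) ≤ (p - 1) / 2 + x := by
  intro x hx1 hx2
  have hp := (Fact.out : p.Prime).two_le
  obtain ⟨t, htU, htx, htop⟩ :=
    (hU.isTransTournamentOn hp4).exists_subset_card_eq_forall_rel (k := x) (by omega)
  have hbound := card_mul_card_add_one_le (m := p / 2) (by omega)
    (by rw [ZMod.ringChar_zmod_n]; omega)
    fun c hc β hβ => pow_div_two_eq_one_of_paleyChar_eq_one (htop c hc β hβ)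
  rw [card_sdiff_of_subset htU, htx] at hbound
  omega
end

section
/- Let p be an odd prime and let A, B ⊆ F_p be subsets such that the sumset A + B = {a + b : a ∈ A, b ∈ B} is contained in Q_p ∪ {0}, where Q_p is the set of nonzero quadratic residues modulo p. Then |A|·|B| ≤ (p−1)/2 + |B ∩ (−A)|, where −A = {−a : a ∈ A}. -/
open Finset Polynomial
variable {F : Type*} [Field F] [DecidableEq F]

noncomputable def lag (A : Finset F) (a : F) : F := (∏ a' ∈ A.erase a, (a - a'))⁻¹

lemma lag_moment (A : Finset F) {K : ℕ} (hcard : A.card = K + 1) {s : ℕ} (hs : s ≤ K) :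
    ∑ a ∈ A, lag A a * a ^ s = if s = K then 1 else 0 := by
  have hq : ((X : F[X]) ^ s
      - ∑ a ∈ A, C (a ^ s * lag A a) * ∏ a' ∈ A.erase a, (X - C a')) = 0 := by
    apply eq_zero_of_natDegree_lt_card_of_eval_eq_zero' _ A
    · intro a₀ ha₀
      have hd : (∏ a' ∈ A.erase a₀, (a₀ - a')) ≠ 0 := by
        rw [Finset.prod_ne_zero_iff]
        intro a' ha'
        exact sub_ne_zero.mpr (Finset.ne_of_mem_erase ha').symm
      simp only [eval_sub, eval_pow, eval_X, eval_finset_sum, eval_mul, eval_C, eval_prod]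
      rw [Finset.sum_eq_single a₀]
      · rw [lag, inv_mul_cancel_right₀ hd]
        ring
      · intro a ha hne
        apply mul_eq_zero_of_right
        exact Finset.prod_eq_zero (Finset.mem_erase.mpr ⟨hne.symm, ha₀⟩) (by
          simp)
      · intro h; exact absurd ha₀ h
    · rw [hcard]
      have h1 : ((X : F[X]) ^ s).natDegree ≤ K := by
        simpa using hs
      have h2 : (∑ a ∈ A, C (a ^ s * lag A a) * ∏ a' ∈ A.erase a, (X - C a')).natDegree ≤ K := by
        apply Polynomial.natDegree_sum_le_of_forall_le
        intro a ha
        refine (Polynomial.natDegree_mul_le).trans ?_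
        rw [Polynomial.natDegree_C]
        have : (∏ a' ∈ A.erase a, (X - C a')).natDegree = K := by
          rw [Polynomial.natDegree_prod_of_monic _ _ (fun a' _ => monic_X_sub_C a')]
          simp [Finset.card_erase_of_mem ha, hcard]
        omega
      have := Polynomial.natDegree_sub_le ((X : F[X]) ^ s)
        (∑ a ∈ A, C (a ^ s * lag A a) * ∏ a' ∈ A.erase a, (X - C a'))
      omega
  have h0 := congrArg (fun q : F[X] => q.coeff K) hq
  simp only [coeff_sub, coeff_X_pow, finset_sum_coeff, coeff_C_mul, coeff_zero] at h0
  have hc : ∀ a ∈ A, (∏ a' ∈ A.erase a, ((X : F[X]) - C a')).coeff K = 1 := by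
    intro a ha
    have hm : (∏ a' ∈ A.erase a, ((X : F[X]) - C a')).Monic :=
      monic_prod_of_monic _ _ (fun a' _ => monic_X_sub_C a')
    have hdeg : (∏ a' ∈ A.erase a, ((X : F[X]) - C a')).natDegree = K := by
      rw [Polynomial.natDegree_prod_of_monic _ _ (fun a' _ => monic_X_sub_C a')]
      simp [Finset.card_erase_of_mem ha, hcard]
    rw [← hdeg]
    exact hm.coeff_natDegree
  rw [Finset.sum_congr rfl (fun a ha => by rw [hc a ha, mul_one])] at h0
  have h1 : ∑ a ∈ A, a ^ s * lag A a = if K = s then 1 else 0 := by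
    have := sub_eq_zero.mp h0
    linear_combination -this
  rw [Finset.sum_congr rfl (fun a _ => mul_comm (lag A a) (a ^ s))]
  rw [h1]
  simp [eq_comm]

lemma lag_shift (A : Finset F) {K : ℕ} (hcard : A.card = K + 1) (x : F) {j : ℕ} (hj : j ≤ K) :
    ∑ a ∈ A, lag A a * (a + x) ^ j = if j = K then 1 else 0 := by
  have key : ∀ a : F, (a + x) ^ j
      = ∑ s ∈ Finset.range (j + 1), (x ^ (j - s) * (j.choose s : F)) * a ^ s := by
    intro a
    rw [add_pow]
    exact Finset.sum_congr rfl (fun s _ => by ring)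
  calc ∑ a ∈ A, lag A a * (a + x) ^ j
      = ∑ s ∈ Finset.range (j + 1),
          (x ^ (j - s) * (j.choose s : F)) * ∑ a ∈ A, lag A a * a ^ s := by
        simp_rw [key, Finset.mul_sum]
        rw [Finset.sum_comm]
        exact Finset.sum_congr rfl (fun s _ =>
          Finset.sum_congr rfl (fun a _ => by ring))
    _ = ∑ s ∈ Finset.range (j + 1),
          (if s = K then x ^ (j - s) * (j.choose s : F) else 0) := by
        refine Finset.sum_congr rfl (fun s hs => ?_)
        rw [lag_moment A hcard (le_trans (Nat.lt_succ_iff.mp (Finset.mem_range.mp hs)) hj)]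
        split <;> simp
    _ = if j = K then 1 else 0 := by
        rw [Finset.sum_ite_eq' (Finset.range (j + 1)) K]
        by_cases hjK : j = K
        · subst hjK; simp
        · have : K ∉ Finset.range (j + 1) := by
            simp only [Finset.mem_range]; omega
          simp [this, hjK]

theorem hanson_petridis (p : ℕ) [Fact p.Prime] (hodd : Odd p)
    (A B : Finset (ZMod p))
    (hAB : ∀ a ∈ A, ∀ b ∈ B, a + b = 0 ∨ (a + b ≠ 0 ∧ IsSquare (a + b))) :
    A.card * B.card ≤ (p - 1) / 2 + (B ∩ A.image (fun a => -a)).card := by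
  obtain ⟨r, hp⟩ := hodd
  have hprime := (Fact.out : p.Prime)
  have hp2 : 2 ≤ p := hprime.two_le
  have hr : 1 ≤ r := by omega
  set m := p / 2 with hm
  have hm' : m = r := by omega
  have hE : (p - 1) / 2 = m := by omega
  rcases A.eq_empty_or_nonempty with rfl | hA
  · simp
  rcases B.eq_empty_or_nonempty with rfl | hB
  · simp
  obtain ⟨K, hK⟩ : ∃ K, A.card = K + 1 :=
    ⟨A.card - 1, by have := Finset.card_pos.mpr hA; omega⟩
  have hsq : ∀ a ∈ A, ∀ b ∈ B, a + b = 0 ∨ (a + b) ^ m = 1 := by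
    intro a ha b hb
    rcases hAB a ha b hb with h | ⟨h1, h2⟩
    · exact Or.inl h
    · exact Or.inr (hm ▸ (ZMod.euler_criterion p h1).mp h2)
  -- K ≤ m
  have hKm : K ≤ m := by
    by_contra hc
    push_neg at hc
    obtain ⟨b₀, hb₀⟩ := hB
    set g : Polynomial (ZMod p) := X ^ (m + 1) - X with hg
    have hg0 : g = 0 := by
      apply Polynomial.eq_zero_of_natDegree_lt_card_of_eval_eq_zero' g
        (A.image (fun a => a + b₀))
      · intro x hx
        obtain ⟨a, ha, rfl⟩ := Finset.mem_image.mp hx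
        rcases hsq a ha b₀ hb₀ with h | h
        · simp [hg, h]
        · simp [hg, pow_succ, h]
      · rw [Finset.card_image_of_injective _ (add_left_injective b₀)]
        have h1 : g.natDegree ≤ m + 1 := by
          apply le_trans (Polynomial.natDegree_sub_le _ _)
          simp
        omega
    have h2 : g.coeff (m + 1) = 1 := by
      rw [hg, Polynomial.coeff_sub, Polynomial.coeff_X_pow, Polynomial.coeff_X,
        if_pos rfl, if_neg (by omega)]
      simp
    rw [hg0] at h2
    simp at h2
  -- main construction
  set c : ZMod p → ZMod p := lag A with hc
  set N := m + K with hN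
  set P : Polynomial (ZMod p) := ∑ a ∈ A, Polynomial.C (c a) * (X + Polynomial.C a) ^ N
    with hP
  set f : Polynomial (ZMod p) := P - 1 with hf
  have hNp : N < p := by omega
  have hchoose : (((N.choose m) : ℕ) : ZMod p) ≠ 0 := by
    rw [Ne, ZMod.natCast_eq_zero_iff]
    intro hdvd
    have h1 : N.choose m ∣ N.factorial :=
      ⟨m.factorial * K.factorial, by
        rw [← mul_assoc, ← Nat.choose_mul_factorial_mul_factorial (by omega : m ≤ N)]
        congr 2
        omega⟩
    have h2 := (Nat.Prime.dvd_factorial hprime).mp (hdvd.trans h1)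
    omega
  have hPcoeff : ∀ j, P.coeff j = (∑ a ∈ A, c a * a ^ (N - j)) * ((N.choose j : ℕ) : ZMod p) := by
    intro j
    rw [hP, Polynomial.finset_sum_coeff, Finset.sum_mul]
    refine Finset.sum_congr rfl (fun a ha => ?_)
    rw [Polynomial.coeff_C_mul, Polynomial.coeff_X_add_C_pow]
    ring
  have hfdeg : f.natDegree ≤ m := by
    apply Polynomial.natDegree_le_iff_coeff_eq_zero.mpr
    intro j hj
    rw [hf, Polynomial.coeff_sub, hPcoeff j, Polynomial.coeff_one, if_neg (by omega), sub_zero]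
    by_cases hjN : j ≤ N
    · have hs : N - j ≤ K := by omega
      have hs' : ¬ (N - j = K) := by omega
      rw [hc, lag_moment A hK hs, if_neg hs', zero_mul]
    · rw [Nat.choose_eq_zero_of_lt (by omega), Nat.cast_zero, mul_zero]
  have hfm : f.coeff m = ((N.choose m : ℕ) : ZMod p) := by
    rw [hf, Polynomial.coeff_sub, hPcoeff m, Polynomial.coeff_one, if_neg (by omega), sub_zero,
      (by omega : N - m = K), hc, lag_moment A hK le_rfl, if_pos rfl, one_mul]
  have hf0 : f ≠ 0 := fun h => hchoose (by rw [← hfm, h, Polynomial.coeff_zero])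
  -- multiplicity of each b ∈ B
  set e : ZMod p → ℕ := fun b => if -b ∈ A then K else K + 1 with he
  have hdvd : ∀ b ∈ B, (X - Polynomial.C b) ^ (e b) ∣ f := by
    intro b hb
    have hcomp : f.comp (X + Polynomial.C b)
        = (∑ a ∈ A, Polynomial.C (c a) * (X + Polynomial.C (a + b)) ^ N) - 1 := by
      rw [hf, hP, Polynomial.sub_comp, Polynomial.one_comp, Polynomial.sum_comp]
      congr 1
      refine Finset.sum_congr rfl (fun a ha => ?_)
      rw [Polynomial.mul_comp, Polynomial.C_comp, Polynomial.pow_comp, Polynomial.add_comp,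
        Polynomial.X_comp, Polynomial.C_comp]
      rw [add_assoc, ← Polynomial.C_add, add_comm a b]
    have hco : ∀ i < e b, (f.comp (X + Polynomial.C b)).coeff i = 0 := by
      intro i hi
      have hiK : i ≤ K := by
        by_cases h : -b ∈ A <;> simp only [he, h, if_pos, if_neg, if_true, if_false] at hi <;> omega
      rw [hcomp, Polynomial.coeff_sub, Polynomial.finset_sum_coeff]
      have hterm : ∀ a ∈ A, (Polynomial.C (c a) * (X + Polynomial.C (a + b)) ^ N).coeff i
          = (c a * (a + b) ^ (N - i)) * ((N.choose i : ℕ) : ZMod p) := by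
        intro a ha
        rw [Polynomial.coeff_C_mul, Polynomial.coeff_X_add_C_pow]
        ring
      rw [Finset.sum_congr rfl hterm, ← Finset.sum_mul]
      have hNi : N - i = m + (K - i) := by omega
      have hE1 : ∑ a ∈ A, c a * (a + b) ^ (N - i) = ∑ a ∈ A, c a * (a + b) ^ (K - i) := by
        rw [hNi]
        refine Finset.sum_congr rfl (fun a ha => ?_)
        rcases hsq a ha b hb with h | h
        · have hbA : -b ∈ A := by
            have : a = -b := eq_neg_of_add_eq_zero_left h
            rwa [← this]
          have hiK' : i < K := by simpa only [he, hbA, if_pos] using hi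
          rw [h, zero_pow (by omega : m + (K - i) ≠ 0), zero_pow (by omega : K - i ≠ 0)]
        · rw [pow_add, h, one_mul]
      rw [hE1, hc, lag_shift A hK b (by omega : K - i ≤ K)]
      by_cases hi0 : i = 0
      · subst hi0
        rw [if_pos (by omega), Nat.choose_zero_right, Polynomial.coeff_one, if_pos rfl]
        simp
      · rw [if_neg (by omega), Polynomial.coeff_one, if_neg hi0, zero_mul, sub_zero]
    have hXdvd : X ^ (e b) ∣ f.comp (X + Polynomial.C b) := Polynomial.X_pow_dvd_iff.mpr hco
    obtain ⟨g, hg⟩ := hXdvd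
    have hfeq : f = (X - Polynomial.C b) ^ (e b) * g.comp (X - Polynomial.C b) := by
      have h1 : f = (f.comp (X + Polynomial.C b)).comp (X - Polynomial.C b) := by
        rw [Polynomial.comp_assoc]
        simp
      rw [h1, hg, Polynomial.mul_comp, Polynomial.pow_comp, Polynomial.X_comp]
    exact ⟨g.comp (X - Polynomial.C b), hfeq⟩
  have hprod : (∏ b ∈ B, (X - Polynomial.C b) ^ (e b)) ∣ f := by
    apply Finset.prod_dvd_of_coprime
    · intro b hb b' hb' hne
      exact IsCoprime.pow (Polynomial.pairwise_coprime_X_sub_C Function.injective_id hne)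
    · intro b hb
      exact hdvd b hb
  have hdegprod : (∏ b ∈ B, (X - Polynomial.C b) ^ (e b)).natDegree = ∑ b ∈ B, e b := by
    rw [Polynomial.natDegree_prod_of_monic _ _ (fun b _ => (monic_X_sub_C b).pow _)]
    refine Finset.sum_congr rfl (fun b _ => ?_)
    rw [Polynomial.natDegree_pow, Polynomial.natDegree_X_sub_C, mul_one]
  have hle : ∑ b ∈ B, e b ≤ m := by
    rw [← hdegprod]
    exact le_trans (Polynomial.natDegree_le_of_dvd hprod hf0) hfdeg
  -- arithmetic conclusion
  have hT : B.filter (fun b => -b ∈ A) = B ∩ A.image (fun a => -a) := by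
    ext b
    simp only [Finset.mem_filter, Finset.mem_inter, Finset.mem_image]
    constructor
    · rintro ⟨hb, hA'⟩
      exact ⟨hb, ⟨-b, hA', by simp⟩⟩
    · rintro ⟨hb, ⟨a, ha, rfl⟩⟩
      exact ⟨hb, by simpa using ha⟩
  have hcardt : (B ∩ A.image (fun a => -a)).card = ∑ b ∈ B, (if -b ∈ A then 1 else 0) := by
    rw [← hT, Finset.card_filter]
  have hsum : ∑ b ∈ B, e b + (B ∩ A.image (fun a => -a)).card = (K + 1) * B.card := by
    rw [hcardt, ← Finset.sum_add_distrib]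
    rw [Finset.sum_congr rfl (fun b _ => (by by_cases h : -b ∈ A <;> simp [he, h] :
      e b + (if -b ∈ A then 1 else 0) = K + 1))]
    rw [Finset.sum_const, smul_eq_mul, mul_comm]
  rw [hK, hE]
  have := add_le_add_right hle ((B ∩ A.image (fun a => -a)).card)
  omega
end
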